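/- arXiv:2401.13263 — 2 statements merged into one kernel-verified Lean document; each statement's English description precedes it below -/
import Mathlib

section
/- Let n ≥ 2 and n < p < ∞, and let Ω ⊂ ℝⁿ be a bounded domain which is a local Sobolev–Poincaré imbedding domain of order p, i.e. there exist constants C ≥ 1 and λ ≥ 1 such that for every locally Lipschitz function u : Ω → ℝ, every x ∈ Ω, every 0 < r < diam(Ω) and all x₁, x₂ ∈ B(x,r) ∩ Ω, |u(x₁) − u(x₂)| ≤ C |x₁ − x₂|^{1 − n/p} (∫_{B(x,λr)∩Ω} |∇u(y)|^p dy)^{1/p}. Then Ω is intrinsic Ahlfors n-regular. -/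
open Set Metric MeasureTheory ENNReal NNReal

noncomputable section

/-- Euclidean space `ℝⁿ`. -/
abbrev Euc (n : ℕ) : Type := EuclideanSpace ℝ (Fin n)

/-- `u` is locally Lipschitz on the set `Ω`. -/
def LocallyLipschitzOnSet {n : ℕ} (u : Euc n → ℝ) (Ω : Set (Euc n)) : Prop :=
  ∀ x ∈ Ω, ∃ K : ℝ≥0, ∃ s ∈ nhdsWithin x Ω, LipschitzOnWith K u s

/-- `x` and `y` are joined by a (continuous) curve lying in `S`. -/
def JoinedByCurveIn {n : ℕ} (S : Set (Euc n)) (x y : Euc n) : Prop :=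
  ∃ γ : ℝ → Euc n, ContinuousOn γ (Icc 0 1) ∧ γ 0 = x ∧ γ 1 = y ∧ MapsTo γ (Icc 0 1) S

/-- `γ` is parametrized by arclength on `[0, L]`. -/
def ArclengthOn {n : ℕ} (γ : ℝ → Euc n) (L : ℝ) : Prop :=
  ∀ s t : ℝ, 0 ≤ s → s ≤ t → t ≤ L → eVariationOn γ (Icc s t) = ENNReal.ofReal (t - s)

/-- `Ω` is an `ε₀`-uniform domain. -/
def IsUniformWith {n : ℕ} (Ω : Set (Euc n)) (ε₀ : ℝ) : Prop :=
  ∀ x ∈ Ω, ∀ y ∈ Ω, ∃ γ : ℝ → Euc n,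
    ContinuousOn γ (Icc 0 1) ∧ γ 0 = x ∧ γ 1 = y ∧ MapsTo γ (Icc 0 1) Ω ∧
    eVariationOn γ (Icc 0 1) ≤ ENNReal.ofReal (dist x y / ε₀) ∧
    ∀ t ∈ Icc (0:ℝ) 1,
      ε₀ * (dist x (γ t) * dist y (γ t)) / dist x y ≤ infDist (γ t) (frontier Ω)

/-- `Ω` is a uniform domain. -/
def IsUniformDomain {n : ℕ} (Ω : Set (Euc n)) : Prop :=
  ∃ ε₀ : ℝ, 0 < ε₀ ∧ ε₀ ≤ 1 ∧ IsUniformWith Ω ε₀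

/-- `Ω` is an `α`-cigar domain: any two points can be joined by a rectifiable
(arclength-parametrized) curve in `Ω` along which
`∫_γ dist(z, ∂Ω)^(α-1) |dz| ≤ C |x - y|^α`. -/
def IsCigarDomain {n : ℕ} (Ω : Set (Euc n)) (α : ℝ) : Prop :=
  ∃ C : ℝ, 0 < C ∧ ∀ x ∈ Ω, ∀ y ∈ Ω, ∃ L : ℝ, 0 ≤ L ∧ ∃ γ : ℝ → Euc n,
    γ 0 = x ∧ γ L = y ∧ MapsTo γ (Icc 0 L) Ω ∧ ArclengthOn γ L ∧
    (∫⁻ t in Icc (0:ℝ) L, ENNReal.ofReal (infDist (γ t) (frontier Ω) ^ (α - 1)) ∂volume)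
      ≤ ENNReal.ofReal (C * dist x y ^ α)

/-- `Ω` is a `c₀`-John domain. -/
def IsJohnDomain {n : ℕ} (Ω : Set (Euc n)) (c₀ : ℝ) : Prop :=
  ∃ x₀ ∈ Ω, ∀ x ∈ Ω, ∃ l : ℝ, 0 ≤ l ∧ ∃ γ : ℝ → Euc n,
    γ 0 = x ∧ γ l = x₀ ∧ MapsTo γ (Icc 0 l) Ω ∧ ArclengthOn γ l ∧
    ∀ t ∈ Icc (0:ℝ) l, c₀ * t ≤ infDist (γ t) (frontier Ω)

/-- `Ω` has the `C`-slice property with respect to `x₀`. -/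
def HasSliceProperty {n : ℕ} (Ω : Set (Euc n)) (C : ℝ) (x₀ : Euc n) : Prop :=
  ∀ x ∈ Ω, ∃ γ : ℝ → Euc n,
    ContinuousOn γ (Icc 0 1) ∧ γ 0 = x₀ ∧ γ 1 = x ∧ MapsTo γ (Icc 0 1) Ω ∧
    ∃ j : ℕ, ∃ U : Fin (j + 1) → Set (Euc n),
      (∀ i, IsOpen (U i) ∧ U i ⊆ Ω) ∧
      (Pairwise fun i₁ i₂ => Disjoint (U i₁) (U i₂)) ∧
      -- (1)
      x₀ ∈ U 0 ∧ x ∈ U (Fin.last j) ∧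
      (∀ i : Fin (j + 1), 0 < (i : ℕ) → (i : ℕ) < j →
        x₀ ∈ Ω \ closure (U i) ∧ x ∈ Ω \ closure (U i) ∧
        x ∉ connectedComponentIn (Ω \ closure (U i)) x₀) ∧
      -- (2)
      (∀ i : Fin (j + 1), 0 < (i : ℕ) → (i : ℕ) < j →
        ∀ γ' : ℝ → Euc n, ContinuousOn γ' (Icc 0 1) → MapsTo γ' (Icc 0 1) Ω →
          (∃ t ∈ Icc (0:ℝ) 1, γ' t = x) → (∃ t ∈ Icc (0:ℝ) 1, γ' t = x₀) →
          ENNReal.ofReal (diam (U i)) ≤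
            ENNReal.ofReal C * eVariationOn γ' {t ∈ Icc (0:ℝ) 1 | γ' t ∈ U i}) ∧
      -- (3)
      (∀ t ∈ Icc (0:ℝ) 1,
        ball (γ t) (infDist (γ t) (frontier Ω) / C) ⊆ ⋃ i, closure (U i)) ∧
      -- (4)
      (∀ i : Fin (j + 1), ∀ t ∈ Icc (0:ℝ) 1, γ t ∈ U i →
        diam (U i) ≤ C * infDist (γ t) (frontier Ω)) ∧
      (∀ i : Fin (j + 1), ∃ xi ∈ U i, (∃ t ∈ Icc (0:ℝ) 1, γ t = xi) ∧
        ((i : ℕ) = j → xi = x) ∧ ball xi (infDist xi (frontier Ω) / C) ⊆ U i)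

/-- `Ω` satisfies the slice condition. -/
def SliceCondition {n : ℕ} (Ω : Set (Euc n)) : Prop :=
  ∃ C : ℝ, 1 < C ∧ ∀ x₀ ∈ Ω, HasSliceProperty Ω C x₀

/-- `Ω` is LLC. -/
def IsLLC {n : ℕ} (Ω : Set (Euc n)) : Prop :=
  ∃ b : ℝ, 0 < b ∧ b ≤ 1 ∧ ∀ z : Euc n, ∀ r : ℝ, 0 < r →
    (∀ x ∈ Ω ∩ ball z r, ∀ y ∈ Ω ∩ ball z r, JoinedByCurveIn (Ω ∩ ball z (r / b)) x y) ∧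
    (∀ x ∈ Ω \ ball z r, ∀ y ∈ Ω \ ball z r, JoinedByCurveIn (Ω \ ball z (b * r)) x y)

/-- `Ω` is quasiconvex. -/
def IsQuasiconvex {n : ℕ} (Ω : Set (Euc n)) : Prop :=
  ∃ C : ℝ, 1 ≤ C ∧ ∀ x ∈ Ω, ∀ y ∈ Ω, ∃ γ : ℝ → Euc n,
    ContinuousOn γ (Icc 0 1) ∧ γ 0 = x ∧ γ 1 = y ∧ MapsTo γ (Icc 0 1) Ω ∧
    eVariationOn γ (Icc 0 1) ≤ ENNReal.ofReal (C * dist x y)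

/-- The intrinsic (inner) metric of `Ω` (`∞` if there is no rectifiable curve). -/
def intrinsicDist {n : ℕ} (Ω : Set (Euc n)) (x y : Euc n) : ℝ≥0∞ :=
  ⨅ (γ : ℝ → Euc n)
    (_ : ContinuousOn γ (Icc 0 1) ∧ γ 0 = x ∧ γ 1 = y ∧ MapsTo γ (Icc 0 1) Ω),
    eVariationOn γ (Icc 0 1)

/-- The intrinsic ball `B_Ω(x, r)`. -/
def intrinsicBall {n : ℕ} (Ω : Set (Euc n)) (x : Euc n) (r : ℝ) : Set (Euc n) :=
  {y ∈ Ω | intrinsicDist Ω x y < ENNReal.ofReal r}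

/-- `Ω` is intrinsic Ahlfors `n`-regular. -/
def IntrinsicAhlforsRegular {n : ℕ} (Ω : Set (Euc n)) : Prop :=
  ∃ c : ℝ, 0 < c ∧ c < 1 ∧ ∃ r₀ : ℝ, 0 < r₀ ∧ ∀ x ∈ Ω, ∀ r : ℝ, 0 < r → r < r₀ →
    ENNReal.ofReal c * volume (ball x r) ≤ volume (intrinsicBall Ω x r)

/-- `Ω` is a local Sobolev–Poincaré imbedding domain of order `p`, `1 ≤ p < n`. -/
def LocalSPLow (n : ℕ) (Ω : Set (Euc n)) (p : ℝ) : Prop :=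
  ∃ C : ℝ, 1 ≤ C ∧ ∃ lam : ℝ, 1 ≤ lam ∧
    ∀ u : Euc n → ℝ, LocallyLipschitzOnSet u Ω →
      ∀ x ∈ Ω, ∀ r : ℝ, 0 < r → r < diam Ω →
        (⨅ c : ℝ, (∫⁻ y in ball x r ∩ Ω,
            ENNReal.ofReal |u y - c| ^ ((n : ℝ) * p / ((n : ℝ) - p)) ∂volume)
              ^ (((n : ℝ) - p) / ((n : ℝ) * p)))
          ≤ ENNReal.ofReal C *
            (∫⁻ y in ball x (lam * r) ∩ Ω,
              ENNReal.ofReal ‖fderiv ℝ u y‖ ^ p ∂volume) ^ (1 / p)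

/-- `Ω` is a local Sobolev–Poincaré imbedding domain of order `n`
(local Trudinger inequality). -/
def LocalSPn (n : ℕ) (Ω : Set (Euc n)) : Prop :=
  ∃ C : ℝ, 1 ≤ C ∧ ∃ lam : ℝ, 1 ≤ lam ∧ ∃ A : ℝ, 0 < A ∧
    ∀ u : Euc n → ℝ, LocallyLipschitzOnSet u Ω →
      ∀ x ∈ Ω, ∀ r : ℝ, 0 < r → r < diam Ω →
        0 < (∫⁻ y in ball x (lam * r) ∩ Ω,
              ENNReal.ofReal ‖fderiv ℝ u y‖ ^ (n : ℝ) ∂volume) →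
        (∫⁻ y in ball x (lam * r) ∩ Ω,
              ENNReal.ofReal ‖fderiv ℝ u y‖ ^ (n : ℝ) ∂volume) < ⊤ →
        (⨅ c : ℝ, ∫⁻ y in ball x r ∩ Ω,
            ENNReal.ofReal (Real.exp ((A * |u y - c| /
              (∫⁻ z in ball x (lam * r) ∩ Ω,
                ENNReal.ofReal ‖fderiv ℝ u z‖ ^ (n : ℝ) ∂volume).toReal
                  ^ ((1 : ℝ) / (n : ℝ))) ^ ((n : ℝ) / ((n : ℝ) - 1)))) ∂volume)
          ≤ ENNReal.ofReal C * volume (ball x r)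

/-- `Ω` is a local Sobolev–Poincaré imbedding domain of order `p`, `n < p < ∞`
(local Morrey inequality). -/
def LocalSPHigh (n : ℕ) (Ω : Set (Euc n)) (p : ℝ) : Prop :=
  ∃ C : ℝ, 1 ≤ C ∧ ∃ lam : ℝ, 1 ≤ lam ∧
    ∀ u : Euc n → ℝ, LocallyLipschitzOnSet u Ω →
      ∀ x ∈ Ω, ∀ r : ℝ, 0 < r → r < diam Ω →
        ∀ x₁ ∈ ball x r ∩ Ω, ∀ x₂ ∈ ball x r ∩ Ω,
          ENNReal.ofReal |u x₁ - u x₂| ≤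
            ENNReal.ofReal (C * dist x₁ x₂ ^ (1 - (n : ℝ) / p)) *
              (∫⁻ y in ball x (lam * r) ∩ Ω,
                ENNReal.ofReal ‖fderiv ℝ u y‖ ^ p ∂volume) ^ (1 / p)

/-- `Ω` is a `p`-Poincaré domain. -/
def PoincareDomain (n : ℕ) (Ω : Set (Euc n)) (p : ℝ) : Prop :=
  ∃ C : ℝ, 1 ≤ C ∧ ∃ lam : ℝ, 1 ≤ lam ∧
    ∀ u : Euc n → ℝ, LocallyLipschitzOnSet u Ω →
      ∀ x ∈ Ω, ∀ r : ℝ, 0 < r → r < diam Ω →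
        (volume (ball x r ∩ Ω))⁻¹ *
          (∫⁻ y in ball x r ∩ Ω,
            ENNReal.ofReal |u y - ⨍ z in ball x r ∩ Ω, u z ∂volume| ∂volume)
          ≤ ENNReal.ofReal (C * r) *
            ((volume (ball x (lam * r) ∩ Ω))⁻¹ *
              ∫⁻ y in ball x (lam * r) ∩ Ω,
                ENNReal.ofReal ‖fderiv ℝ u y‖ ^ p ∂volume) ^ (1 / p)


/-!
Test the Morrey inequality on the truncated intrinsic distance `u = min (d_Ω(x, ·)) (ρ / 2)`.
It is `1`-Lipschitz on balls inside `Ω` and locally constant off `B_Ω(x, ρ / 2)`, so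
`∫_Ω |∇u|^p ≤ |B_Ω(x, ρ)|`. Since `ρ < diam Ω` and `Ω` is connected, `d_Ω(x, ·)` takes the
value `ρ / 4` at some `z`, and `|z - x| ≤ ρ / 4`. Morrey at `z` and `x` then gives
`ρ / 4 ≤ C (ρ / 4)^(1 - n/p) |B_Ω(x, ρ)|^(1/p)`, i.e. `|B_Ω(x, ρ)| ≥ (ρ / 4)^n / C^p`.
-/

open Filter Topology

section CurveTrans

variable {E : Type*} {γ₁ γ₂ : ℝ → E}

def curveTrans (γ₁ γ₂ : ℝ → E) (t : ℝ) : E :=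
  if t ≤ 1 / 2 then γ₁ (2 * t) else γ₂ (2 * t - 1)

lemma curveTrans_zero : curveTrans γ₁ γ₂ 0 = γ₁ 0 := by
  simp [curveTrans]

lemma curveTrans_one : curveTrans γ₁ γ₂ 1 = γ₂ 1 := by
  norm_num [curveTrans]

lemma eqOn_curveTrans_left :
    EqOn (curveTrans γ₁ γ₂) (γ₁ ∘ fun t => 2 * t) (Icc 0 (1 / 2)) := fun _ ht => if_pos ht.2

lemma eqOn_curveTrans_right (h : γ₁ 1 = γ₂ 0) :
    EqOn (curveTrans γ₁ γ₂) (γ₂ ∘ fun t => 2 * t - 1) (Icc (1 / 2) 1) := by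
  rintro t ⟨ht, -⟩
  rcases ht.eq_or_lt with rfl | ht
  · norm_num [curveTrans, h]
  · exact if_neg ht.not_ge

lemma mapsTo_double_Icc : MapsTo (fun t : ℝ => 2 * t) (Icc 0 (1 / 2)) (Icc 0 1) :=
  fun t ht => ⟨by linarith [ht.1], by linarith [ht.2]⟩

lemma mapsTo_double_sub_one_Icc :
    MapsTo (fun t : ℝ => 2 * t - 1) (Icc (1 / 2) 1) (Icc 0 1) :=
  fun t ht => ⟨by linarith [ht.1], by linarith [ht.2]⟩

lemma continuousOn_curveTrans [TopologicalSpace E] (h₁ : ContinuousOn γ₁ (Icc 0 1))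
    (h₂ : ContinuousOn γ₂ (Icc 0 1)) (h : γ₁ 1 = γ₂ 0) :
    ContinuousOn (curveTrans γ₁ γ₂) (Icc 0 1) := by
  have hleft : ContinuousOn (curveTrans γ₁ γ₂) (Icc 0 (1 / 2)) :=
    (h₁.comp (by fun_prop) mapsTo_double_Icc).congr eqOn_curveTrans_left
  have hright : ContinuousOn (curveTrans γ₁ γ₂) (Icc (1 / 2) 1) :=
    (h₂.comp (by fun_prop) mapsTo_double_sub_one_Icc).congr (eqOn_curveTrans_right h)
  rw [← Icc_union_Icc_eq_Icc (by norm_num : (0 : ℝ) ≤ 1 / 2) (by norm_num)]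
  exact hleft.union_of_isClosed hright isClosed_Icc isClosed_Icc

lemma mapsTo_curveTrans {S : Set E} (h₁ : MapsTo γ₁ (Icc 0 1) S) (h₂ : MapsTo γ₂ (Icc 0 1) S) :
    MapsTo (curveTrans γ₁ γ₂) (Icc 0 1) S := by
  intro t ht
  by_cases h : t ≤ 1 / 2
  · rw [eqOn_curveTrans_left ⟨ht.1, h⟩]
    exact h₁ (mapsTo_double_Icc ⟨ht.1, h⟩)
  · rw [curveTrans, if_neg h]
    exact h₂ (mapsTo_double_sub_one_Icc ⟨(not_le.mp h).le, ht.2⟩)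

lemma eVariationOn_curveTrans_le [PseudoEMetricSpace E] (h : γ₁ 1 = γ₂ 0) :
    eVariationOn (curveTrans γ₁ γ₂) (Icc 0 1) ≤
      eVariationOn γ₁ (Icc 0 1) + eVariationOn γ₂ (Icc 0 1) := by
  have hsplit := eVariationOn.Icc_add_Icc (curveTrans γ₁ γ₂) (s := univ)
    (by norm_num : (0 : ℝ) ≤ 1 / 2) (by norm_num : (1 / 2 : ℝ) ≤ 1) (mem_univ _)
  simp only [univ_inter] at hsplit
  rw [← hsplit, eVariationOn.congr eqOn_curveTrans_left, eVariationOn.congr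
    (eqOn_curveTrans_right h)]
  gcongr
  · exact eVariationOn.comp_le_of_monotoneOn _ _
      (fun a _ b _ hab => by linarith) mapsTo_double_Icc
  · exact eVariationOn.comp_le_of_monotoneOn _ _
      (fun a _ b _ hab => by linarith) mapsTo_double_sub_one_Icc

end CurveTrans

section IntrinsicDist

variable {n : ℕ} {Ω : Set (Euc n)} {x y z : Euc n}

lemma intrinsicDist_le_eVariationOn {γ : ℝ → Euc n} (hc : ContinuousOn γ (Icc 0 1))
    (h0 : γ 0 = x) (h1 : γ 1 = y) (hm : MapsTo γ (Icc 0 1) Ω) :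
    intrinsicDist Ω x y ≤ eVariationOn γ (Icc 0 1) :=
  iInf₂_le γ ⟨hc, h0, h1, hm⟩

lemma intrinsicDist_self (hx : x ∈ Ω) : intrinsicDist Ω x x = 0 :=
  nonpos_iff_eq_zero.mp <| (intrinsicDist_le_eVariationOn continuousOn_const rfl rfl
    fun _ _ => hx).trans_eq <|
      eVariationOn.constant_on (by rintro _ ⟨_, _, rfl⟩ _ ⟨_, _, rfl⟩; rfl)

lemma edist_le_intrinsicDist : edist x y ≤ intrinsicDist Ω x y :=
  le_iInf₂ fun γ ⟨_, h0, h1, _⟩ => h0 ▸ h1 ▸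
    eVariationOn.edist_le γ (left_mem_Icc.mpr zero_le_one) (right_mem_Icc.mpr zero_le_one)

lemma intrinsicDist_triangle :
    intrinsicDist Ω x z ≤ intrinsicDist Ω x y + intrinsicDist Ω y z :=
  ENNReal.le_iInf_add_iInf fun γ₁ γ₂ => ENNReal.le_iInf_add_iInf
    fun ⟨hc₁, h0₁, h1₁, hm₁⟩ ⟨hc₂, h0₂, h1₂, hm₂⟩ =>
      have h : γ₁ 1 = γ₂ 0 := h1₁.trans h0₂.symm
      (intrinsicDist_le_eVariationOn (continuousOn_curveTrans hc₁ hc₂ h)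
        (curveTrans_zero.trans h0₁) (curveTrans_one.trans h1₂)
        (mapsTo_curveTrans hm₁ hm₂)).trans (eVariationOn_curveTrans_le h)

lemma intrinsicDist_le_edist_of_segment_subset (h : segment ℝ x y ⊆ Ω) :
    intrinsicDist Ω x y ≤ edist x y := by
  refine (intrinsicDist_le_eVariationOn (AffineMap.lineMap_continuous.continuousOn)
    (AffineMap.lineMap_apply_zero x y) (AffineMap.lineMap_apply_one x y)
    fun t ht => h (lineMap_mem_segment ℝ x y ht)).trans ?_
  calc eVariationOn (AffineMap.lineMap x y ∘ id) (Icc (0 : ℝ) 1)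
      ≤ nndist x y * eVariationOn id (Icc (0 : ℝ) 1) :=
        ((lipschitzWith_lineMap x y).lipschitzOnWith (s := univ)).comp_eVariationOn_le
          (mapsTo_univ _ _)
    _ = edist x y := by
        rw [eVariationOn_id_Icc, sub_zero, ENNReal.ofReal_one, mul_one, edist_nndist]

lemma IsOpen.eventually_intrinsicDist_le_edist (hO : IsOpen Ω) (hx : x ∈ Ω) :
    ∀ᶠ y in 𝓝 x, intrinsicDist Ω x y ≤ edist x y ∧ intrinsicDist Ω y x ≤ edist y x := by
  obtain ⟨δ, hδ, hball⟩ := Metric.isOpen_iff.mp hO x hx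
  filter_upwards [ball_mem_nhds x hδ] with y hy
  have hseg := ((convex_ball x δ).segment_subset (mem_ball_self hδ) hy).trans hball
  exact ⟨intrinsicDist_le_edist_of_segment_subset hseg,
    intrinsicDist_le_edist_of_segment_subset (segment_symm ℝ x y ▸ hseg)⟩

lemma intrinsicDist_ne_top (hO : IsOpen Ω) (hΩ : IsPreconnected Ω) (hx : x ∈ Ω) (hy : y ∈ Ω) :
    intrinsicDist Ω x y ≠ ⊤ := by
  refine hΩ.induction₂' (fun a b => intrinsicDist Ω a b ≠ ⊤) (fun a ha => ?_)
    (fun a b c _ _ _ hab hbc => ne_top_of_le_ne_top (ENNReal.add_ne_top.mpr ⟨hab, hbc⟩)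
      intrinsicDist_triangle) hx hy
  filter_upwards [nhdsWithin_le_nhds (hO.eventually_intrinsicDist_le_edist ha)] with b hb
  exact ⟨ne_top_of_le_ne_top (edist_ne_top a b) hb.1, ne_top_of_le_ne_top (edist_ne_top b a) hb.2⟩

end IntrinsicDist

section TruncatedIntrinsicDist

variable {n : ℕ} {Ω : Set (Euc n)} {x y w : Euc n}

lemma dist_le_toReal_intrinsicDist (hO : IsOpen Ω) (hΩ : IsPreconnected Ω) (hx : x ∈ Ω)
    (hy : y ∈ Ω) : dist x y ≤ (intrinsicDist Ω x y).toReal := by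
  rw [dist_edist]
  exact ENNReal.toReal_mono (intrinsicDist_ne_top hO hΩ hx hy) edist_le_intrinsicDist

lemma lipschitzOnWith_toReal_intrinsicDist (hO : IsOpen Ω) (hΩ : IsPreconnected Ω)
    (hx : x ∈ Ω) {δ : ℝ} (hball : ball w δ ⊆ Ω) :
    LipschitzOnWith 1 (fun v => (intrinsicDist Ω x v).toReal) (ball w δ) :=
  LipschitzOnWith.of_le_add fun a ha b hb => by
    have hseg := ((convex_ball w δ).segment_subset hb ha).trans hball
    have h : intrinsicDist Ω x a ≤ intrinsicDist Ω x b + edist b a :=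
      intrinsicDist_triangle.trans
        (add_le_add le_rfl (intrinsicDist_le_edist_of_segment_subset hseg))
    rw [dist_comm, dist_edist]
    exact ENNReal.toReal_le_add h (intrinsicDist_ne_top hO hΩ hx (hball hb)) (edist_ne_top b a)

lemma continuousOn_toReal_intrinsicDist (hO : IsOpen Ω) (hΩ : IsPreconnected Ω) (hx : x ∈ Ω) :
    ContinuousOn (fun v => (intrinsicDist Ω x v).toReal) Ω := fun y hy => by
  obtain ⟨δ, hδ, hball⟩ := Metric.isOpen_iff.mp hO y hy
  exact ((lipschitzOnWith_toReal_intrinsicDist hO hΩ hx hball).continuousOn.continuousAt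
    (ball_mem_nhds y hδ)).continuousWithinAt

lemma exists_toReal_intrinsicDist_eq (hO : IsOpen Ω) (hΩ : IsPreconnected Ω) (hx : x ∈ Ω)
    (hw : w ∈ Ω) {a : ℝ} (ha : 0 ≤ a) (haw : a ≤ dist x w) :
    ∃ z ∈ Ω, (intrinsicDist Ω x z).toReal = a :=
  hΩ.intermediate_value hx hw (continuousOn_toReal_intrinsicDist hO hΩ hx)
    ⟨by simpa [intrinsicDist_self hx] using ha,
      haw.trans (dist_le_toReal_intrinsicDist hO hΩ hx hw)⟩

lemma lipschitzOnWith_min_toReal_intrinsicDist (hO : IsOpen Ω) (hΩ : IsPreconnected Ω)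
    (hx : x ∈ Ω) {δ : ℝ} (hball : ball w δ ⊆ Ω) (s : ℝ) :
    LipschitzOnWith 1 (fun v => min (intrinsicDist Ω x v).toReal s) (ball w δ) := by
  have h := (LipschitzWith.id.min_const s).comp_lipschitzOnWith
    (lipschitzOnWith_toReal_intrinsicDist hO hΩ hx hball)
  rwa [mul_one] at h

lemma locallyLipschitzOnSet_min_toReal_intrinsicDist (hO : IsOpen Ω) (hΩ : IsPreconnected Ω)
    (hx : x ∈ Ω) (s : ℝ) :
    LocallyLipschitzOnSet (fun v => min (intrinsicDist Ω x v).toReal s) Ω := fun y hy => by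
  obtain ⟨δ, hδ, hball⟩ := Metric.isOpen_iff.mp hO y hy
  exact ⟨1, ball y δ, mem_nhdsWithin_of_mem_nhds (ball_mem_nhds y hδ),
    lipschitzOnWith_min_toReal_intrinsicDist hO hΩ hx hball s⟩

lemma norm_fderiv_min_toReal_intrinsicDist_le_one (hO : IsOpen Ω) (hΩ : IsPreconnected Ω)
    (hx : x ∈ Ω) (hy : y ∈ Ω) (s : ℝ) :
    ‖fderiv ℝ (fun v => min (intrinsicDist Ω x v).toReal s) y‖ ≤ 1 := by
  obtain ⟨δ, hδ, hball⟩ := Metric.isOpen_iff.mp hO y hy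
  simpa using norm_fderiv_le_of_lipschitzOn ℝ (ball_mem_nhds y hδ)
    (lipschitzOnWith_min_toReal_intrinsicDist hO hΩ hx hball s)

lemma fderiv_min_toReal_intrinsicDist_eq_zero (hO : IsOpen Ω) (hΩ : IsPreconnected Ω)
    (hx : x ∈ Ω) (hy : y ∈ Ω) {s : ℝ} (hs : s < (intrinsicDist Ω x y).toReal) :
    fderiv ℝ (fun v => min (intrinsicDist Ω x v).toReal s) y = 0 := by
  have hconst : (fun v => min (intrinsicDist Ω x v).toReal s) =ᶠ[𝓝 y] fun _ => s := by
    filter_upwards [((continuousOn_toReal_intrinsicDist hO hΩ hx).continuousAt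
      (hO.mem_nhds hy)).eventually (lt_mem_nhds hs)] with v hv using min_eq_right hv.le
  rw [hconst.fderiv_eq, fderiv_const_apply]

lemma setLIntegral_norm_fderiv_rpow_le_volume_intrinsicBall (hO : IsOpen Ω)
    (hΩ : IsPreconnected Ω) (hx : x ∈ Ω) {s ρ p : ℝ} (hsρ : s < ρ) (hp : 0 < p) :
    ∫⁻ y in Ω, ENNReal.ofReal ‖fderiv ℝ (fun v => min (intrinsicDist Ω x v).toReal s) y‖ ^ p
      ≤ volume (intrinsicBall Ω x ρ) := by
  refine setLIntegral_le_meas hO.measurableSet (fun y hy _ => ENNReal.rpow_le_one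
    (ENNReal.ofReal_le_one.mpr (norm_fderiv_min_toReal_intrinsicDist_le_one hO hΩ hx hy s))
    hp.le) fun y hy hyB => ?_
  have hρ : ρ ≤ (intrinsicDist Ω x y).toReal :=
    (ENNReal.ofReal_le_iff_le_toReal (intrinsicDist_ne_top hO hΩ hx hy)).mp
      (not_lt.mp fun h => hyB ⟨hy, h⟩)
  rw [fderiv_min_toReal_intrinsicDist_eq_zero hO hΩ hx hy (hsρ.trans_le hρ), norm_zero,
    ENNReal.ofReal_zero, ENNReal.zero_rpow_of_pos hp]

end TruncatedIntrinsicDist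

lemma Metric.exists_mem_le_dist_of_two_mul_lt_diam {α : Type*} [PseudoMetricSpace α] {s : Set α}
    (x : α) {r : ℝ} (hr : 0 ≤ r) (h : 2 * r < diam s) : ∃ y ∈ s, r ≤ dist x y := by
  by_contra! hs
  have : diam s ≤ 2 * r :=
    (diam_mono (fun y hy => mem_ball'.mpr (hs y hy)) isBounded_ball).trans (diam_ball hr)
  linarith

lemma IsOpen.diam_pos {E : Type*} [NormedAddCommGroup E] [NormedSpace ℝ E] [Nontrivial E]
    {U : Set E} (hU : IsOpen U) (hne : U.Nonempty) (hb : Bornology.IsBounded U) : 0 < diam U := by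
  obtain ⟨x, hx⟩ := hne
  obtain ⟨δ, hδ, hball⟩ := Metric.isOpen_iff.mp hU x hx
  calc 0 < 2 * δ := by positivity
    _ = diam (ball x δ) := (diam_ball_eq x hδ.le).symm
    _ ≤ diam U := diam_mono hball hb

lemma ENNReal.ofReal_rpow_div_le_of_le_mul_rpow {a C p q : ℝ} {W : ℝ≥0∞} (ha : 0 < a)
    (hC : 0 < C) (hp : 0 < p)
    (h : ENNReal.ofReal a ≤ ENNReal.ofReal (C * a ^ (1 - q / p)) * W ^ (1 / p)) :
    ENNReal.ofReal (a ^ q / C ^ p) ≤ W := by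
  have hB : 0 < C * a ^ (1 - q / p) := by positivity
  have hroot : a / (C * a ^ (1 - q / p)) = (a ^ q / C ^ p) ^ (1 / p) := by
    rw [Real.div_rpow (by positivity) (by positivity), ← Real.rpow_mul ha.le,
      ← Real.rpow_mul hC.le, mul_one_div_cancel hp.ne', Real.rpow_one, Real.rpow_sub ha,
      Real.rpow_one, mul_one_div]
    field_simp
  have h' : ENNReal.ofReal (a / (C * a ^ (1 - q / p))) ≤ W ^ (1 / p) := by
    rw [ENNReal.ofReal_div_of_pos hB, ENNReal.div_le_iff (ENNReal.ofReal_pos.mpr hB).ne'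
      ENNReal.ofReal_ne_top, mul_comm]
    exact h
  rw [hroot, ← ENNReal.ofReal_rpow_of_nonneg (by positivity) (by positivity)] at h'
  exact (ENNReal.rpow_le_rpow_iff (by positivity)).mp h'

theorem LocalSPHigh.exists_ofReal_mul_pow_le_volume_intrinsicBall {n : ℕ} {Ω : Set (Euc n)}
    {p : ℝ} (hSP : LocalSPHigh n Ω p) (hpn : (n : ℝ) < p) (hO : IsOpen Ω)
    (hΩ : IsPreconnected Ω) :
    ∃ K : ℝ, 0 < K ∧ ∀ x ∈ Ω, ∀ ρ : ℝ, 0 < ρ → ρ < diam Ω →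
      ENNReal.ofReal (K * ρ ^ n) ≤ volume (intrinsicBall Ω x ρ) := by
  obtain ⟨C, hC, lam, -, hmorrey⟩ := hSP
  have hp : 0 < p := (Nat.cast_nonneg n).trans_lt hpn
  have hC0 : 0 < C := one_pos.trans_le hC
  refine ⟨(4 ^ n * C ^ p)⁻¹, by positivity, fun x hx ρ hρ hρd => ?_⟩
  obtain ⟨w, hw, hxw⟩ :=
    exists_mem_le_dist_of_two_mul_lt_diam (s := Ω) x (by positivity : 0 ≤ ρ / 2) (by linarith)
  obtain ⟨z, hz, hxz⟩ :=
    exists_toReal_intrinsicDist_eq hO hΩ hx hw (by positivity : 0 ≤ ρ / 4) (by linarith)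
  have hzx : dist z x ≤ ρ / 4 := by
    rw [dist_comm, ← hxz]
    exact dist_le_toReal_intrinsicDist hO hΩ hx hz
  have key := hmorrey _ (locallyLipschitzOnSet_min_toReal_intrinsicDist hO hΩ hx (ρ / 2)) x hx
    (ρ / 2) (by positivity) (by linarith) z ⟨mem_ball.mpr (by linarith), hz⟩ x
    ⟨mem_ball_self (by positivity), hx⟩
  have hjump : min (intrinsicDist Ω x z).toReal (ρ / 2) - min (intrinsicDist Ω x x).toReal (ρ / 2)
      = ρ / 4 := by
    rw [hxz, intrinsicDist_self hx, ENNReal.toReal_zero, min_eq_left (by linarith),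
      min_eq_left (by positivity), sub_zero]
  have hgrad := (lintegral_mono_set (inter_subset_right (s := ball x (lam * (ρ / 2))))).trans
    (setLIntegral_norm_fderiv_rpow_le_volume_intrinsicBall hO hΩ hx (by linarith : ρ / 2 < ρ) hp)
  rw [hjump, abs_of_pos (by positivity)] at key
  have hα : 0 ≤ 1 - (n : ℝ) / p := sub_nonneg.mpr ((div_le_one hp).mpr hpn.le)
  have := ENNReal.ofReal_rpow_div_le_of_le_mul_rpow (q := n)
    (W := volume (intrinsicBall Ω x ρ)) (by positivity) hC0 hp (key.trans (by gcongr))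
  rw [Real.rpow_natCast, div_pow] at this
  convert this using 2
  ring

lemma exists_ofReal_mul_volume_ball_le {n : ℕ} {K : ℝ} (hK : 0 < K) :
    ∃ c : ℝ, 0 < c ∧ c < 1 ∧ ∀ (x : Euc n) (r : ℝ), 0 < r →
      ENNReal.ofReal c * volume (ball x r) ≤ ENNReal.ofReal (K * r ^ n) := by
  set κ := (volume (ball (0 : Euc n) 1)).toReal
  have hκ : 0 ≤ κ := ENNReal.toReal_nonneg
  set c := min (1 / 2) (K / (κ + 1))
  have hcκ : c * κ ≤ K := calc
    c * κ ≤ K / (κ + 1) * (κ + 1) := by gcongr; exacts [min_le_right _ _, by linarith]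
    _ = K := div_mul_cancel₀ K (by positivity)
  refine ⟨c, by positivity, (min_le_left _ _).trans_lt (by norm_num), fun x r hr => ?_⟩
  rw [Measure.addHaar_ball_of_pos volume x hr, finrank_euclideanSpace_fin,
    ← ENNReal.ofReal_toReal (measure_ball_lt_top (x := (0 : Euc n)) (r := 1)).ne,
    ← ENNReal.ofReal_mul (by positivity), ← ENNReal.ofReal_mul (by positivity)]
  apply ENNReal.ofReal_le_ofReal
  calc c * (r ^ n * κ) = c * κ * r ^ n := by ring
    _ ≤ K * r ^ n := by gcongr

/-- a bounded local Sobolev–Poincaré imbedding domain of order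
`p`, `n < p < ∞`, is intrinsic Ahlfors `n`-regular. -/
theorem stmt12 (n : ℕ) (hn : 2 ≤ n) (p : ℝ) (hpn : (n : ℝ) < p)
    (Ω : Set (Euc n)) (hOpen : IsOpen Ω)
    (hConn : IsConnected Ω) (hBdd : Bornology.IsBounded Ω)
    (hSP : LocalSPHigh n Ω p) :
    IntrinsicAhlforsRegular Ω := by
  have : Nonempty (Fin n) := ⟨⟨0, by omega⟩⟩
  obtain ⟨K, hK, hvol⟩ :=
    hSP.exists_ofReal_mul_pow_le_volume_intrinsicBall hpn hOpen hConn.isPreconnected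
  obtain ⟨c, hc0, hc1, hball⟩ := exists_ofReal_mul_volume_ball_le (n := n) hK
  exact ⟨c, hc0, hc1, diam Ω, hOpen.diam_pos hConn.nonempty hBdd,
    fun x hx r hr hrd => (hball x r hr).trans (hvol x hx r hr hrd)⟩
end
end

section
/- Let n ≥ 2 and 1 ≤ p < n, and let Ω ⊂ ℝⁿ be a bounded domain. Suppose there exist constants C ≥ 1 and λ ≥ 1 such that for every locally Lipschitz function u : Ω → ℝ, every x₀ ∈ Ω and every 0 < r < ∞, inf_{c∈ℝ} (∫_{B(x₀,r)∩Ω} |u(y) − c|^{np/(n−p)} dy)^{(n−p)/(np)} ≤ C (∫_{B(x₀,λr)∩Ω} |∇u(y)|^p dy)^{1/p}. Then Ω is LLC. -/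
open Set Metric MeasureTheory ENNReal NNReal

noncomputable section

/-!
The Sobolev–Poincaré inequality forbids a locally Lipschitz function of small gradient energy
from being `0` on one large part and `1` on another large part of the same ball.

LLC(1): if `y` lies outside the component of `x` in `Ω ∩ B(x, 3λr)`, a radial cutoff restricted
to that component is locally Lipschitz on `Ω`, has zero gradient on `B(x, λr)` and is `1` near
`x` and `0` near `y`, which the inequality on `B(x, r)` rules out.

Testing the inequality with radial cutoffs also gives `|B(x, t) ∩ Ω| ≥ δ tⁿ` for `t ≤ diam Ω`:
a too small density ratio `|B(x, t) ∩ Ω| / tⁿ` halves at scale `t / 2` or `2t`, and iterating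
pushes it below its positive lower bound at small scales.

LLC(2): if `x, y ∉ B(z, r)` lie in different components of `Ω \ B̄(z, br)`, the cutoff on the
component of `x` has gradient `≲ 1 / (br)` on an annulus of measure `≲ (br)ⁿ`, and is a.e. `1`
on `B(x, t) ∩ Ω` and a.e. `0` on `B(y, t) ∩ Ω` for `t = r / (2λ)`. Both sets have measure
`≳ tⁿ`, so the inequality gives `t ^ ((n - p) / p) ≲ (br) ^ ((n - p) / p)`, false for small `b`.
-/

open Filter Topology

section Curves

variable {n : ℕ}

theorem JoinedByCurveIn.mono {S T : Set (Euc n)} {x y : Euc n} (h : JoinedByCurveIn S x y)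
    (hST : S ⊆ T) : JoinedByCurveIn T x y :=
  let ⟨γ, hγc, hγ0, hγ1, hγS⟩ := h
  ⟨γ, hγc, hγ0, hγ1, hγS.mono_right hST⟩

theorem JoinedIn.joinedByCurveIn {S : Set (Euc n)} {x y : Euc n} (h : JoinedIn S x y) :
    JoinedByCurveIn S x y := by
  obtain ⟨γ, hγ⟩ := h
  refine ⟨γ.extend, γ.continuous_extend.continuousOn, γ.extend_zero, γ.extend_one,
    fun t ht => ?_⟩
  rw [γ.extend_apply ht]
  exact hγ _

theorem joinedByCurveIn_of_mem_connectedComponentIn {U : Set (Euc n)} (hU : IsOpen U)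
    {x y : Euc n} (hy : y ∈ connectedComponentIn U x) : JoinedByCurveIn U x y := by
  have hx : x ∈ U := connectedComponentIn_nonempty_iff.1 ⟨y, hy⟩
  have hpath : IsPathConnected (connectedComponentIn U x) :=
    hU.connectedComponentIn.isConnected_iff_isPathConnected.1
      (isConnected_connectedComponentIn_iff.2 hx)
  exact (hpath.joinedIn x (mem_connectedComponentIn hx) y hy).joinedByCurveIn.mono
    (connectedComponentIn_subset U x)

end Curves

section Components

variable {X β : Type*} [TopologicalSpace X] [LocallyConnectedSpace X] [Zero β]

theorem notMem_closure_connectedComponentIn {U : Set X} (hU : IsOpen U) {x w : X} (hw : w ∈ U)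
    (hwx : w ∉ connectedComponentIn U x) : w ∉ closure (connectedComponentIn U x) := by
  intro hcl
  obtain ⟨v, hvw, hvx⟩ := mem_closure_iff_nhds.1 hcl _
    (hU.connectedComponentIn.mem_nhds (mem_connectedComponentIn hw))
  refine hwx ?_
  rw [connectedComponentIn_eq hvx, ← connectedComponentIn_eq hvw]
  exact mem_connectedComponentIn hw

theorem indicator_connectedComponentIn_eventuallyEq {U W : Set X} (hU : IsOpen U) (hW : IsOpen W)
    {θ : X → β} (hθW : EqOn θ 0 W) (x : X) {w : X} (hw : w ∈ U ∪ W) :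
    (connectedComponentIn U x).indicator θ =ᶠ[𝓝 w] θ ∨
      (connectedComponentIn U x).indicator θ =ᶠ[𝓝 w] 0 := by
  by_cases hwx : w ∈ connectedComponentIn U x
  · left
    filter_upwards [hU.connectedComponentIn.mem_nhds hwx] with v hv using indicator_of_mem hv θ
  right
  rcases hw with hwU | hwW
  · filter_upwards [isClosed_closure.isOpen_compl.mem_nhds
      (notMem_closure_connectedComponentIn hU hwU hwx)] with v hv
    exact indicator_of_notMem (fun h => hv (subset_closure h)) θ
  · filter_upwards [hW.mem_nhds hwW] with v hv
    exact indicator_apply_eq_zero.2 fun _ => hθW hv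

end Components

section Cutoff

theorem norm_fderiv_indicator_connectedComponentIn_le {E : Type*} [NormedAddCommGroup E]
    [NormedSpace ℝ E] {U W : Set E} (hU : IsOpen U)
    (hW : IsOpen W) {θ : E → ℝ} (hθW : EqOn θ 0 W) (x : E) {w : E} (hw : w ∈ U ∪ W) :
    ‖fderiv ℝ ((connectedComponentIn U x).indicator θ) w‖ ≤ ‖fderiv ℝ θ w‖ := by
  rcases indicator_connectedComponentIn_eventuallyEq hU hW hθW x hw with h | h
  · rw [h.fderiv_eq]
  · rw [h.fderiv_eq]
    simp

variable {X E : Type*} [PseudoMetricSpace X] [NormedAddCommGroup E] [NormedSpace ℝ E]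

def radialCutoff (z : X) (a b : ℝ) (w : X) : ℝ := max 0 (min 1 ((dist w z - a) / (b - a)))

variable {z w : X} {a b : ℝ}

theorem radialCutoff_of_dist_le (hab : a < b) (h : dist w z ≤ a) : radialCutoff z a b w = 0 :=
  max_eq_left (min_le_of_right_le (div_nonpos_of_nonpos_of_nonneg (by linarith) (by linarith)))

theorem radialCutoff_of_le_dist (hab : a < b) (h : b ≤ dist w z) : radialCutoff z a b w = 1 := by
  rw [radialCutoff, min_eq_left ((one_le_div (by linarith)).2 (by linarith))]
  exact max_eq_right zero_le_one

theorem lipschitzWith_radialCutoff (hab : a < b) :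
    LipschitzWith (b - a)⁻¹.toNNReal (radialCutoff z a b) := by
  have hclamp : LipschitzWith 1 fun s : ℝ => max 0 (min 1 s) := by
    simpa using
      (LipschitzWith.const (0 : ℝ)).max ((LipschitzWith.const (1 : ℝ)).min LipschitzWith.id)
  have haffine : LipschitzWith (b - a)⁻¹.toNNReal fun s : ℝ => (s - a) / (b - a) := by
    refine LipschitzWith.of_dist_le_mul fun s t => ?_
    rw [Real.coe_toNNReal _ (inv_nonneg.2 (by linarith)), Real.dist_eq, Real.dist_eq,
      div_sub_div_same, sub_sub_sub_cancel_right, abs_div, abs_of_pos (by linarith : 0 < b - a),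
      div_eq_inv_mul]
  have h := (hclamp.comp haffine).comp (LipschitzWith.dist_left z)
  rwa [one_mul, mul_one] at h

theorem norm_fderiv_radialCutoff_le {z : E} (hab : a < b) (w : E) :
    ‖fderiv ℝ (radialCutoff z a b) w‖ ≤
      (closedBall z b \ ball z a).indicator (fun _ => (b - a)⁻¹) w := by
  by_cases hw : w ∈ closedBall z b \ ball z a
  · rw [indicator_of_mem hw]
    simpa [Real.coe_toNNReal _ (inv_nonneg.2 (by linarith : 0 ≤ b - a))] using
      norm_fderiv_le_of_lipschitz ℝ (lipschitzWith_radialCutoff (z := z) hab) (x₀ := w)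
  rw [indicator_of_notMem hw, norm_le_zero_iff]
  rcases not_and_or.1 hw with hb | ha
  · have : radialCutoff z a b =ᶠ[𝓝 w] fun _ => 1 :=
      eventually_of_mem (isClosed_closedBall.isOpen_compl.mem_nhds hb) fun v hv =>
        radialCutoff_of_le_dist hab (not_le.1 (mt mem_closedBall.2 hv)).le
    rw [this.fderiv_eq, fderiv_const_apply]
  · have : radialCutoff z a b =ᶠ[𝓝 w] fun _ => 0 :=
      eventually_of_mem (isOpen_ball.mem_nhds (not_not.1 ha)) fun v hv =>
        radialCutoff_of_dist_le hab (mem_ball.1 hv).le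
    rw [this.fderiv_eq, fderiv_const_apply]

end Cutoff

section LocallyLipschitz

variable {n : ℕ} {u : Euc n → ℝ} {Ω : Set (Euc n)}

theorem LocallyLipschitzOnSet.continuousOn (hu : LocallyLipschitzOnSet u Ω) : ContinuousOn u Ω :=
  fun x hx => by
    obtain ⟨K, s, hs, hKs⟩ := hu x hx
    exact (hKs.continuousOn.continuousWithinAt (mem_of_mem_nhdsWithin hx hs)).mono_of_mem_nhdsWithin
      hs

theorem locallyLipschitzOnSet_of_eventuallyEq {K : ℝ≥0}
    (h : ∀ w ∈ Ω, ∃ g : Euc n → ℝ, LipschitzWith K g ∧ u =ᶠ[𝓝 w] g) :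
    LocallyLipschitzOnSet u Ω := by
  intro w hw
  obtain ⟨g, hg, hug⟩ := h w hw
  refine ⟨K, {v | u v = g v}, nhdsWithin_le_nhds hug, fun a ha b hb => ?_⟩
  rw [show u a = g a from ha, show u b = g b from hb]
  exact hg a b

theorem locallyLipschitzOnSet_indicator_connectedComponentIn {U W : Set (Euc n)} (hU : IsOpen U)
    (hW : IsOpen W) (hΩ : Ω ⊆ U ∪ W) {θ : Euc n → ℝ} {K : ℝ≥0} (hθ : LipschitzWith K θ)
    (hθW : EqOn θ 0 W) (x : Euc n) :
    LocallyLipschitzOnSet ((connectedComponentIn U x).indicator θ) Ω :=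
  locallyLipschitzOnSet_of_eventuallyEq fun _ hw =>
    (indicator_connectedComponentIn_eventuallyEq hU hW hθW x (hΩ hw)).elim
      (fun h => ⟨θ, hθ, h⟩) fun h => ⟨0, LipschitzWith.const' 0, h⟩

theorem subset_sdiff_closedBall_union_ball {z : Euc n} {s : ℝ} (hs : 0 < s) :
    Ω ⊆ (Ω \ closedBall z s) ∪ ball z (2 * s) := fun w hw =>
  (le_or_gt (dist w z) s).elim (fun h => Or.inr (mem_ball.2 (by linarith)))
    fun h => Or.inl ⟨hw, fun h' => (mem_closedBall.1 h').not_gt h⟩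

theorem locallyLipschitzOnSet_indicator_radialCutoff (hΩ : IsOpen Ω) {z : Euc n} {s : ℝ}
    (hs : 0 < s) (x : Euc n) :
    LocallyLipschitzOnSet ((connectedComponentIn (Ω \ closedBall z s) x).indicator
      (radialCutoff z (2 * s) (3 * s))) Ω := by
  have hab : 2 * s < 3 * s := by linarith
  exact locallyLipschitzOnSet_indicator_connectedComponentIn (hΩ.sdiff isClosed_closedBall)
    isOpen_ball (subset_sdiff_closedBall_union_ball hs) (lipschitzWith_radialCutoff hab)
    (fun w hw => radialCutoff_of_dist_le hab (mem_ball.1 hw).le) x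

theorem norm_fderiv_indicator_radialCutoff_le (hΩ : IsOpen Ω) {z : Euc n} {s : ℝ} (hs : 0 < s)
    (x : Euc n) {w : Euc n} (hw : w ∈ Ω) :
    ‖fderiv ℝ ((connectedComponentIn (Ω \ closedBall z s) x).indicator
        (radialCutoff z (2 * s) (3 * s))) w‖ ≤
      (closedBall z (3 * s) \ ball z (2 * s)).indicator (fun _ => s⁻¹) w := by
  have hab : 2 * s < 3 * s := by linarith
  have := (norm_fderiv_indicator_connectedComponentIn_le (hΩ.sdiff isClosed_closedBall)
    isOpen_ball (θ := radialCutoff z (2 * s) (3 * s))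
    (fun v hv => radialCutoff_of_dist_le hab (mem_ball.1 hv).le) x
    (subset_sdiff_closedBall_union_ball hs hw)).trans (norm_fderiv_radialCutoff_le hab w)
  rwa [show 3 * s - 2 * s = s by ring] at this

end LocallyLipschitz

theorem toReal_volume_ball {n : ℕ} (hn : 0 < n) (x : Euc n) {s : ℝ} (hs : 0 ≤ s) :
    (volume (ball x s)).toReal = s ^ n * (volume (ball (0 : Euc n) 1)).toReal := by
  have : Nonempty (Fin n) := ⟨⟨0, hn⟩⟩
  rw [Measure.addHaar_ball volume x hs, finrank_euclideanSpace_fin, ENNReal.toReal_mul,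
    ENNReal.toReal_ofReal (by positivity)]

theorem toReal_volume_le_of_subset_ball {n : ℕ} (hn : 0 < n) {A : Set (Euc n)} {x : Euc n}
    {ρ : ℝ} (hA : A ⊆ ball x ρ) (hρ : 0 ≤ ρ) :
    (volume A).toReal ≤ ρ ^ n * (volume (ball (0 : Euc n) 1)).toReal :=
  (ENNReal.toReal_mono measure_ball_lt_top.ne (measure_mono hA)).trans_eq
    (toReal_volume_ball hn x hρ)

theorem forall_le_abs_sub_or_forall_le_abs_sub {α : Type*} {u : α → ℝ} {V₀ V₁ : Set α} {g : ℝ}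
    (hsep : ∀ a ∈ V₀, ∀ b ∈ V₁, 2 * g ≤ |u a - u b|) (c : ℝ) :
    (∀ a ∈ V₀, g ≤ |u a - c|) ∨ ∀ b ∈ V₁, g ≤ |u b - c| := by
  by_contra! h
  obtain ⟨⟨a, ha, hac⟩, b, hb, hbc⟩ := h
  have := abs_sub_le (u a) c (u b)
  rw [abs_sub_comm c] at this
  linarith [hsep a ha b hb]

section Lintegral

variable {α : Type*} [MeasurableSpace α] {μ : Measure α}

theorem ofReal_rpow_mul_measure_le_setLIntegral {f : α → ℝ} {B V : Set α} (hV : MeasurableSet V)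
    (hVB : V ⊆ B) {g q : ℝ} (hq : 0 ≤ q) (hgf : ∀ y ∈ V, g ≤ f y) :
    ENNReal.ofReal g ^ q * μ V ≤ ∫⁻ y in B, ENNReal.ofReal (f y) ^ q ∂μ :=
  calc ENNReal.ofReal g ^ q * μ V = ∫⁻ _ in V, ENNReal.ofReal g ^ q ∂μ :=
        (setLIntegral_const V _).symm
    _ ≤ ∫⁻ y in V, ENNReal.ofReal (f y) ^ q ∂μ := setLIntegral_mono' hV fun y hy =>
        ENNReal.rpow_le_rpow (ENNReal.ofReal_le_ofReal (hgf y hy)) hq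
    _ ≤ _ := lintegral_mono_set hVB

theorem ofReal_mul_rpow_le_iInf_setLIntegral {u : α → ℝ} {B V₀ V₁ : Set α}
    (hV₀ : MeasurableSet V₀) (hV₁ : MeasurableSet V₁) (hV₀B : V₀ ⊆ B) (hV₁B : V₁ ⊆ B)
    {g q m : ℝ} (hg : 0 ≤ g) (hq : 0 < q) (hm : 0 ≤ m) (hm₀ : ENNReal.ofReal m ≤ μ V₀)
    (hm₁ : ENNReal.ofReal m ≤ μ V₁) (hsep : ∀ a ∈ V₀, ∀ b ∈ V₁, 2 * g ≤ |u a - u b|) :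
    ENNReal.ofReal (g * m ^ q⁻¹) ≤ ⨅ c : ℝ, (∫⁻ y in B, ENNReal.ofReal |u y - c| ^ q ∂μ) ^ q⁻¹ := by
  refine le_iInf fun c => ?_
  have hmass : ENNReal.ofReal g ^ q * ENNReal.ofReal m ≤
      ∫⁻ y in B, ENNReal.ofReal |u y - c| ^ q ∂μ := by
    rcases forall_le_abs_sub_or_forall_le_abs_sub hsep c with h | h
    · exact (mul_le_mul_right hm₀ _).trans
        (ofReal_rpow_mul_measure_le_setLIntegral hV₀ hV₀B hq.le h)
    · exact (mul_le_mul_right hm₁ _).trans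
        (ofReal_rpow_mul_measure_le_setLIntegral hV₁ hV₁B hq.le h)
  calc ENNReal.ofReal (g * m ^ q⁻¹) = (ENNReal.ofReal g ^ q * ENNReal.ofReal m) ^ q⁻¹ := by
        rw [ENNReal.mul_rpow_of_nonneg _ _ (inv_nonneg.2 hq.le), ← ENNReal.rpow_mul,
          mul_inv_cancel₀ hq.ne', ENNReal.rpow_one,
          ENNReal.ofReal_rpow_of_nonneg hm (inv_nonneg.2 hq.le), ENNReal.ofReal_mul hg]
    _ ≤ _ := ENNReal.rpow_le_rpow hmass (inv_nonneg.2 hq.le)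

theorem setLIntegral_ofReal_rpow_le_of_le_indicator {f : α → ℝ} {S K : Set α}
    (hK : MeasurableSet K) {L p : ℝ} (hp : 0 < p)
    (hf : ∀ y ∈ S, f y ≤ K.indicator (fun _ => L) y) :
    ∫⁻ y in S, ENNReal.ofReal (f y) ^ p ∂μ ≤ ENNReal.ofReal L ^ p * μ (K ∩ S) := by
  calc ∫⁻ y in S, ENNReal.ofReal (f y) ^ p ∂μ
      ≤ ∫⁻ y in S, K.indicator (fun _ => ENNReal.ofReal L ^ p) y ∂μ := by
        refine setLIntegral_mono (measurable_const.indicator hK) fun y hy => ?_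
        by_cases hyK : y ∈ K
        · rw [indicator_of_mem hyK]
          have := hf y hy
          rw [indicator_of_mem hyK] at this
          exact ENNReal.rpow_le_rpow (ENNReal.ofReal_le_ofReal this) hp.le
        · have := hf y hy
          rw [indicator_of_notMem hyK] at this ⊢
          rw [ENNReal.ofReal_of_nonpos this, ENNReal.zero_rpow_of_pos hp]
    _ = _ := by rw [setLIntegral_indicator hK, setLIntegral_const]

theorem ofReal_toReal_sub_le_measure_sdiff {s t : Set α} (hs : μ s ≠ ∞) (ht : μ t ≠ ∞) :
    ENNReal.ofReal ((μ t).toReal - (μ s).toReal) ≤ μ (t \ s) := by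
  rw [ENNReal.ofReal_sub _ ENNReal.toReal_nonneg, ENNReal.ofReal_toReal ht,
    ENNReal.ofReal_toReal hs]
  exact le_measure_sdiff

end Lintegral

theorem exists_pos_le_volume_ball_inter_div_pow {n : ℕ} (hn : 0 < n) {Ω : Set (Euc n)}
    (hΩ : IsOpen Ω) {x : Euc n} (hx : x ∈ Ω) {D : ℝ} (hD : 0 < D) :
    ∃ c > 0, ∀ τ ∈ Ioc 0 D, c ≤ (volume (ball x τ ∩ Ω)).toReal / τ ^ n := by
  obtain ⟨ρ, hρ, hρΩ⟩ := isOpen_iff.1 hΩ x hx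
  set ρ' := min ρ D
  have hρ' : 0 < ρ' := lt_min hρ hD
  set ω := (volume (ball (0 : Euc n) 1)).toReal
  have hω : 0 < ω := ENNReal.toReal_pos (measure_ball_pos _ _ one_pos).ne' measure_ball_lt_top.ne
  refine ⟨ω * (ρ' / D) ^ n, by positivity, fun τ ⟨hτ, hτD⟩ => ?_⟩
  have hs : τ * ρ' / D ≤ min τ ρ' := le_min
    ((div_le_iff₀ hD).2 (mul_le_mul_of_nonneg_left (min_le_right _ _) hτ.le))
    ((div_le_iff₀ hD).2 (by rw [mul_comm]; exact mul_le_mul_of_nonneg_left hτD hρ'.le))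
  have hball : ball x (min τ ρ') ⊆ ball x τ ∩ Ω := fun w hw =>
    ⟨ball_subset_ball (min_le_left _ _) hw,
      hρΩ (ball_subset_ball ((min_le_right _ _).trans (min_le_left _ _)) hw)⟩
  rw [le_div_iff₀ (by positivity)]
  calc ω * (ρ' / D) ^ n * τ ^ n = ω * (τ * ρ' / D) ^ n := by ring
    _ ≤ ω * (min τ ρ') ^ n := by gcongr
    _ = (volume (ball x (min τ ρ'))).toReal := by
        rw [toReal_volume_ball hn x (by positivity), mul_comm]
    _ ≤ (volume (ball x τ ∩ Ω)).toReal :=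
        ENNReal.toReal_mono ((measure_mono inter_subset_left).trans_lt measure_ball_lt_top).ne
          (measure_mono hball)

theorem exists_forall_le_div_two_pow_of_rpow_le {n : ℕ} {p A : ℝ} (hp : 0 < p) (hpn : p < n)
    (hA : 0 < A) :
    ∃ δ > 0, ∀ t m Φ : ℝ, 0 < t → 0 ≤ Φ →
      m ^ (((n : ℝ) - p) / ((n : ℝ) * p)) ≤ A / t * Φ ^ (1 / p) → Φ ≤ δ * t ^ n →
        m ≤ Φ / 2 ^ (n + 1) := by
  set e := ((n : ℝ) - p) / ((n : ℝ) * p) with he_def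
  have hn : (0 : ℝ) < n := hp.trans hpn
  have he : 0 < e := div_pos (sub_pos.2 hpn) (mul_pos hn hp)
  set X := (A * 2 ^ (((n : ℝ) + 1) * e))⁻¹ with hX_def
  refine ⟨X ^ n, by positivity, fun t m Φ ht hΦ hmΦ hΦt => ?_⟩
  rcases lt_or_ge m 0 with hm | hm
  · exact hm.le.trans (div_nonneg hΦ (by positivity))
  have hroot : Φ ^ (n : ℝ)⁻¹ ≤ X * t :=
    calc Φ ^ (n : ℝ)⁻¹ ≤ ((X * t) ^ n) ^ (n : ℝ)⁻¹ :=
          Real.rpow_le_rpow hΦ (by rwa [mul_pow]) (by positivity)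
      _ = X * t := Real.pow_rpow_inv_natCast (by positivity) (by exact_mod_cast hn.ne')
  -- `1 / p = 1 / n + 1 / p*`, where `e = 1 / p*`
  have hsplit : Φ ^ (1 / p) = Φ ^ (n : ℝ)⁻¹ * Φ ^ e := by
    rw [← Real.rpow_add' hΦ (by positivity)]
    congr 1
    rw [he_def]
    field_simp
    ring
  have : m ^ e ≤ (Φ / 2 ^ (n + 1)) ^ e :=
    calc m ^ e ≤ A / t * (Φ ^ (n : ℝ)⁻¹ * Φ ^ e) := hsplit ▸ hmΦ
      _ ≤ A / t * (X * t * Φ ^ e) := by gcongr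
      _ = (Φ / 2 ^ (n + 1)) ^ e := by
        rw [Real.div_rpow hΦ (by positivity), ← Real.rpow_natCast, ← Real.rpow_mul zero_le_two]
        push_cast
        rw [hX_def]
        field_simp
  exact (Real.rpow_le_rpow_iff hm (by positivity) he).1 this

theorem exists_mem_Ioc_div_pow_le_half {n : ℕ} (hn : 2 ≤ n) {Φ : ℝ → ℝ} {D M τ : ℝ}
    (hτ : τ ∈ Ioc 0 D) (hΦ : 0 ≤ Φ τ)
    (hdrop : min (Φ (τ / 2)) (Φ (2 * τ) - Φ τ) ≤ Φ τ / 2 ^ (n + 1))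
    (hfull : D < 2 * τ → Φ (2 * τ) = M) (hsmall : Φ τ / τ ^ n < M / (2 * D) ^ n) :
    ∃ τ' ∈ Ioc 0 D, Φ τ' / τ' ^ n ≤ Φ τ / τ ^ n / 2 := by
  obtain ⟨hτ0, hτD⟩ := hτ
  have h4 : (4 : ℝ) ≤ 2 ^ n := by
    calc (4 : ℝ) = 2 ^ 2 := by norm_num
      _ ≤ 2 ^ n := pow_le_pow_right₀ one_le_two hn
  have hR : 0 ≤ Φ τ / τ ^ n := div_nonneg hΦ (pow_nonneg hτ0.le n)
  rcases min_le_iff.1 hdrop with h | h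
  · refine ⟨τ / 2, ⟨by positivity, by linarith⟩, ?_⟩
    calc Φ (τ / 2) / (τ / 2) ^ n = Φ (τ / 2) * 2 ^ n / τ ^ n := by
          rw [div_pow, div_div_eq_mul_div]
      _ ≤ Φ τ / 2 ^ (n + 1) * 2 ^ n / τ ^ n := by gcongr
      _ = Φ τ / τ ^ n / 2 := by rw [pow_succ]; field_simp
  have h2 : Φ (2 * τ) ≤ 2 * Φ τ := by
    linarith [div_le_self hΦ (one_le_pow₀ one_le_two : (1 : ℝ) ≤ 2 ^ (n + 1))]
  have hratio : Φ (2 * τ) / (2 * τ) ^ n ≤ Φ τ / τ ^ n / 2 :=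
    calc Φ (2 * τ) / (2 * τ) ^ n ≤ 2 * Φ τ / (2 * τ) ^ n := by gcongr
      _ = Φ τ / τ ^ n * (2 / 2 ^ n) := by rw [mul_pow]; field_simp
      _ ≤ Φ τ / τ ^ n * (1 / 2) := mul_le_mul_of_nonneg_left
          ((div_le_div_iff₀ (by positivity) two_pos).2 (by linarith)) hR
      _ = Φ τ / τ ^ n / 2 := by ring
  refine ⟨2 * τ, ⟨by positivity, not_lt.1 fun hD => ?_⟩, hratio⟩
  have hDpow : 0 < (2 * D) ^ n := pow_pos (by linarith) n
  have hM : 0 < M :=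
    (div_pos_iff_of_pos_right hDpow).1 (hR.trans_lt hsmall)
  have : M / (2 * D) ^ n ≤ Φ (2 * τ) / (2 * τ) ^ n := by
    rw [hfull hD]
    exact div_le_div_of_nonneg_left hM.le (by positivity)
      (pow_le_pow_left₀ (by positivity) (by linarith) n)
  linarith

theorem le_of_forall_exists_le_half {α : Type*} {R : α → ℝ} {s : Set α} {c δ : ℝ} (hc : 0 < c)
    (hcR : ∀ a ∈ s, c ≤ R a) (hhalf : ∀ a ∈ s, R a < δ → ∃ b ∈ s, R b ≤ R a / 2) :
    ∀ a ∈ s, δ ≤ R a := by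
  intro a ha
  by_contra! hlt
  have hRa : 0 < R a := hc.trans_le (hcR a ha)
  have hiter : ∀ k : ℕ, ∃ b ∈ s, R b ≤ R a / 2 ^ k := by
    intro k
    induction k with
    | zero => exact ⟨a, ha, by simp⟩
    | succ k ih =>
      obtain ⟨b, hb, hbk⟩ := ih
      obtain ⟨b', hb', hb'b⟩ := hhalf b hb
        (hbk.trans_lt ((div_le_self hRa.le (one_le_pow₀ one_le_two)).trans_lt hlt))
      exact ⟨b', hb', hb'b.trans (by rw [pow_succ, ← div_div]; gcongr)⟩
  obtain ⟨k, hk⟩ := pow_unbounded_of_one_lt (R a / c) one_lt_two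
  obtain ⟨b, hb, hbk⟩ := hiter k
  rw [div_lt_iff₀ hc] at hk
  have : R a / 2 ^ k < c := (div_lt_iff₀ (by positivity)).2 (by linarith)
  linarith [hcR b hb]

theorem one_le_mul_div_rpow_of_le {n : ℕ} {p C δ ω t s : ℝ} (hp : 0 < p) (hpn : p < n)
    (hδ : 0 < δ) (hω : 0 ≤ ω) (ht : 0 < t) (hs : 0 < s)
    (h : 1 / 2 * (δ * t ^ n) ^ (((n : ℝ) - p) / ((n : ℝ) * p)) ≤
      C * s⁻¹ * (ω * s ^ n) ^ (1 / p)) :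
    1 ≤ 2 * C * ω ^ (1 / p) / δ ^ (((n : ℝ) - p) / ((n : ℝ) * p)) *
      (s / t) ^ (((n : ℝ) - p) / p) := by
  set e := ((n : ℝ) - p) / ((n : ℝ) * p) with he
  set a := ((n : ℝ) - p) / p with ha
  have hn : (0 : ℝ) < n := hp.trans hpn
  have hlhs : (δ * t ^ n) ^ e = δ ^ e * t ^ a := by
    rw [Real.mul_rpow hδ.le (by positivity), ← Real.rpow_natCast, ← Real.rpow_mul ht.le, he, ha]
    congr 2
    field_simp
  have hrhs : s⁻¹ * (ω * s ^ n) ^ (1 / p) = ω ^ (1 / p) * s ^ a := by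
    rw [Real.mul_rpow hω (by positivity), ← Real.rpow_natCast, ← Real.rpow_mul hs.le,
      show a = n * (1 / p) - 1 by rw [ha]; field_simp, Real.rpow_sub_one hs.ne']
    field_simp
  rw [hlhs, mul_assoc, hrhs] at h
  rw [Real.div_rpow hs.le ht.le, show 2 * C * ω ^ (1 / p) / δ ^ e * (s ^ a / t ^ a) =
    C * (ω ^ (1 / p) * s ^ a) / (1 / 2 * (δ ^ e * t ^ a)) by field_simp, one_le_div (by positivity)]
  exact h

def SobolevPoincareIneq (n : ℕ) (p C lam : ℝ) (Ω : Set (Euc n)) : Prop :=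
  ∀ u : Euc n → ℝ, LocallyLipschitzOnSet u Ω →
    ∀ x₀ ∈ Ω, ∀ r : ℝ, 0 < r →
      (⨅ c : ℝ, (∫⁻ y in ball x₀ r ∩ Ω,
          ENNReal.ofReal |u y - c| ^ ((n : ℝ) * p / ((n : ℝ) - p)) ∂volume)
            ^ (((n : ℝ) - p) / ((n : ℝ) * p)))
        ≤ ENNReal.ofReal C *
          (∫⁻ y in ball x₀ (lam * r) ∩ Ω,
            ENNReal.ofReal ‖fderiv ℝ u y‖ ^ p ∂volume) ^ (1 / p)

namespace SobolevPoincareIneq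

variable {n : ℕ} {p C lam : ℝ} {Ω : Set (Euc n)} {u : Euc n → ℝ} {x₀ : Euc n} {r : ℝ}

theorem mul_rpow_le_of_separated (hsp : SobolevPoincareIneq n p C lam Ω) (hp : 0 < p)
    (hpn : p < n) (hC : 0 ≤ C) (hu : LocallyLipschitzOnSet u Ω) (hx₀ : x₀ ∈ Ω) (hr : 0 < r)
    {K : Set (Euc n)} (hK : MeasurableSet K) {L : ℝ} (hL : 0 ≤ L)
    (hgrad : ∀ w ∈ ball x₀ (lam * r) ∩ Ω, ‖fderiv ℝ u w‖ ≤ K.indicator (fun _ => L) w)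
    {V₀ V₁ : Set (Euc n)} (hV₀ : MeasurableSet V₀) (hV₁ : MeasurableSet V₁)
    (hV₀r : V₀ ⊆ ball x₀ r ∩ Ω) (hV₁r : V₁ ⊆ ball x₀ r ∩ Ω) {g : ℝ} (hg : 0 ≤ g)
    (hsep : ∀ a ∈ V₀, ∀ b ∈ V₁, 2 * g ≤ |u a - u b|) {m : ℝ} (hm : 0 ≤ m)
    (hm₀ : ENNReal.ofReal m ≤ volume V₀) (hm₁ : ENNReal.ofReal m ≤ volume V₁) :
    g * m ^ (((n : ℝ) - p) / ((n : ℝ) * p)) ≤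
      C * L * (volume (K ∩ (ball x₀ (lam * r) ∩ Ω))).toReal ^ (1 / p) := by
  set S := ball x₀ (lam * r) ∩ Ω
  have hq : 0 < (n : ℝ) * p / ((n : ℝ) - p) :=
    div_pos (mul_pos (hp.trans hpn) hp) (sub_pos.2 hpn)
  have hKS : volume (K ∩ S) ≠ ∞ :=
    ((measure_mono (inter_subset_right.trans inter_subset_left)).trans_lt measure_ball_lt_top).ne
  have hlower := ofReal_mul_rpow_le_iInf_setLIntegral hV₀ hV₁ hV₀r hV₁r hg hq hm hm₀ hm₁ hsep
  have hupper : (∫⁻ y in S, ENNReal.ofReal ‖fderiv ℝ u y‖ ^ p) ^ (1 / p) ≤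
      ENNReal.ofReal L * volume (K ∩ S) ^ (1 / p) :=
    calc _ ≤ (ENNReal.ofReal L ^ p * volume (K ∩ S)) ^ (1 / p) :=
          ENNReal.rpow_le_rpow (setLIntegral_ofReal_rpow_le_of_le_indicator hK hp hgrad)
            (by positivity)
      _ = _ := by
          rw [ENNReal.mul_rpow_of_nonneg _ _ (by positivity), ← ENNReal.rpow_mul,
            mul_one_div_cancel hp.ne', ENNReal.rpow_one]
  rw [inv_div] at hlower
  have := hlower.trans ((hsp u hu x₀ hx₀ r hr).trans (mul_le_mul_right hupper _))
  rwa [← ENNReal.ofReal_toReal hKS, ENNReal.ofReal_rpow_of_nonneg ENNReal.toReal_nonneg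
    (by positivity), ← ENNReal.ofReal_mul hL, ← ENNReal.ofReal_mul hC, ← mul_assoc,
    ENNReal.ofReal_le_ofReal_iff (by positivity)] at this

theorem measure_eq_zero_or_of_fderiv_eq_zero (hsp : SobolevPoincareIneq n p C lam Ω) (hp : 0 < p)
    (hpn : p < n) (hC : 0 ≤ C) (hu : LocallyLipschitzOnSet u Ω) (hx₀ : x₀ ∈ Ω) (hr : 0 < r)
    (hgrad : ∀ w ∈ ball x₀ (lam * r) ∩ Ω, fderiv ℝ u w = 0)
    {V₀ V₁ : Set (Euc n)} (hV₀ : MeasurableSet V₀) (hV₁ : MeasurableSet V₁)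
    (hV₀r : V₀ ⊆ ball x₀ r ∩ Ω) (hV₁r : V₁ ⊆ ball x₀ r ∩ Ω) {g : ℝ} (hg : 0 < g)
    (hsep : ∀ a ∈ V₀, ∀ b ∈ V₁, 2 * g ≤ |u a - u b|) :
    volume V₀ = 0 ∨ volume V₁ = 0 := by
  have hfin : ∀ V ⊆ ball x₀ r ∩ Ω, volume V ≠ ∞ := fun V hV =>
    ((measure_mono (hV.trans inter_subset_left)).trans_lt measure_ball_lt_top).ne
  by_contra! hpos
  set m := min (volume V₀).toReal (volume V₁).toReal
  have hm : 0 < m := lt_min (ENNReal.toReal_pos hpos.1 (hfin V₀ hV₀r))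
    (ENNReal.toReal_pos hpos.2 (hfin V₁ hV₁r))
  have := hsp.mul_rpow_le_of_separated hp hpn hC hu hx₀ hr MeasurableSet.empty le_rfl
    (fun w hw => by simp [hgrad w hw]) hV₀ hV₁ hV₀r hV₁r hg.le hsep hm.le
    (ENNReal.ofReal_le_of_le_toReal (min_le_left _ _))
    (ENNReal.ofReal_le_of_le_toReal (min_le_right _ _))
  rw [mul_zero, zero_mul] at this
  exact this.not_gt (by positivity)

theorem volume_inter_preimage_eq_of_fderiv_eq_zero (hsp : SobolevPoincareIneq n p C lam Ω)
    (hp : 0 < p) (hpn : p < n) (hC : 0 ≤ C) (hΩ : IsOpen Ω) (hu : LocallyLipschitzOnSet u Ω)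
    (hx₀ : x₀ ∈ Ω) (hr : 0 < r) (hgrad : ∀ w ∈ ball x₀ (lam * r) ∩ Ω, fderiv ℝ u w = 0)
    {V : Set (Euc n)} (hV : MeasurableSet V) (hVr : V ⊆ ball x₀ r ∩ Ω) (hVpos : volume V ≠ 0)
    {v : ℝ} (huV : ∀ w ∈ V, u w = v) :
    volume (ball x₀ r ∩ Ω ∩ u ⁻¹' {v}) = volume (ball x₀ r ∩ Ω) := by
  have hB : IsOpen (ball x₀ r ∩ Ω) := isOpen_ball.inter hΩ
  set E : ℕ → Set (Euc n) := fun k => ball x₀ r ∩ Ω ∩ (fun w => |u w - v|) ⁻¹' Ioi (1 / (k + 1))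
  have hEopen : ∀ k, IsOpen (E k) := fun k =>
    ((hu.continuousOn.mono inter_subset_right).sub continuousOn_const).abs.isOpen_inter_preimage
      hB isOpen_Ioi
  have hsep : ∀ k : ℕ, ∀ a ∈ E k, ∀ b ∈ V, 2 * (1 / (2 * ((k : ℝ) + 1))) ≤ |u a - u b| :=
    fun k a ha b hb => by
      rw [huV b hb, show 2 * (1 / (2 * ((k : ℝ) + 1))) = 1 / ((k : ℝ) + 1) by field_simp]
      exact ha.2.le
  have hE : ∀ k, volume (E k) = 0 := fun k =>
    (hsp.measure_eq_zero_or_of_fderiv_eq_zero hp hpn hC hu hx₀ hr hgrad (hEopen k).measurableSet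
      hV inter_subset_left hVr (by positivity) (hsep k)).resolve_right hVpos
  refine measure_inter_conull' (measure_mono_null (fun w hw => ?_) (measure_iUnion_null hE))
  obtain ⟨k, hk⟩ := exists_nat_one_div_lt (abs_pos.2 (sub_ne_zero.2 hw.2))
  exact mem_iUnion.2 ⟨k, hw.1, hk⟩

theorem mem_connectedComponentIn_inter_ball (hsp : SobolevPoincareIneq n p C lam Ω) (hp : 0 < p)
    (hpn : p < n) (hC : 0 ≤ C) (hlam : 1 ≤ lam) (hΩ : IsOpen Ω) {x y : Euc n} (hx : x ∈ Ω)
    (hy : y ∈ Ω) (hr : 0 < r) (hxy : dist y x < r) :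
    y ∈ connectedComponentIn (Ω ∩ ball x (3 * (lam * r))) x := by
  have hΛ : r ≤ lam * r := le_mul_of_one_le_left hr.le hlam
  have hab : lam * r < 2 * (lam * r) := by linarith
  set U := Ω ∩ ball x (3 * (lam * r))
  set F := connectedComponentIn U x
  set W := (closedBall x (2 * (lam * r)))ᶜ
  have hU : IsOpen U := hΩ.inter isOpen_ball
  have hW : IsOpen W := isClosed_closedBall.isOpen_compl
  set θ : Euc n → ℝ := fun w => 1 - radialCutoff x (lam * r) (2 * (lam * r)) w
  have hθ := (LipschitzWith.const (1 : ℝ)).sub (lipschitzWith_radialCutoff (z := x) hab)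
  have hθW : EqOn θ 0 W := fun w hw => by
    have hw' : 2 * (lam * r) ≤ dist w x := (not_le.1 (mt mem_closedBall.2 hw)).le
    simp only [θ, Pi.zero_apply, radialCutoff_of_le_dist hab hw', sub_self]
  have hΩUW : Ω ⊆ U ∪ W := fun w hw => by
    by_cases hd : dist w x < 3 * (lam * r)
    · exact Or.inl ⟨hw, hd⟩
    · exact Or.inr fun h => hd ((mem_closedBall.1 h).trans_lt (by linarith))
  have hu := locallyLipschitzOnSet_indicator_connectedComponentIn hU hW hΩUW hθ hθW x
  have hgrad : ∀ w ∈ ball x (lam * r) ∩ Ω, fderiv ℝ (F.indicator θ) w = 0 := fun w hw => by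
    have hcut := norm_fderiv_radialCutoff_le (z := x) hab w
    rw [indicator_of_notMem fun h => h.2 hw.1] at hcut
    have hind := norm_fderiv_indicator_connectedComponentIn_le hU hW hθW x (hΩUW hw.2)
    rw [fderiv_const_sub, norm_neg] at hind
    exact norm_le_zero_iff.1 (hind.trans hcut)
  by_contra hyF
  have hxU : x ∈ U := ⟨hx, mem_ball_self (by positivity)⟩
  have hyU : y ∈ U := ⟨hy, hxy.trans_le (by linarith)⟩
  have hV₀ : IsOpen ((ball x r ∩ Ω) \ closure F) := (isOpen_ball.inter hΩ).sdiff isClosed_closure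
  have hV₁ : IsOpen (F ∩ ball x r) := hU.connectedComponentIn.inter isOpen_ball
  have hFΩ : F ⊆ Ω := (connectedComponentIn_subset U x).trans inter_subset_left
  rcases hsp.measure_eq_zero_or_of_fderiv_eq_zero hp hpn hC hu hx hr hgrad hV₀.measurableSet
    hV₁.measurableSet sdiff_subset (fun w hw => ⟨hw.2, hFΩ hw.1⟩) (g := 1 / 2) (by norm_num)
    (fun a ha b hb => by
      rw [indicator_of_notMem (fun h => ha.2 (subset_closure h)), indicator_of_mem hb.1,
        radialCutoff_of_dist_le hab ((mem_ball.1 hb.2).le.trans hΛ)]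
      norm_num) with h | h
  · exact (hV₀.measure_pos volume
      ⟨y, ⟨hxy, hy⟩, notMem_closure_connectedComponentIn hU hyU hyF⟩).ne' h
  · exact (hV₁.measure_pos volume ⟨x, mem_connectedComponentIn hxU, mem_ball_self hr⟩).ne' h

theorem joinedByCurveIn_inter_ball (hsp : SobolevPoincareIneq n p C lam Ω) (hp : 0 < p)
    (hpn : p < n) (hC : 0 ≤ C) (hlam : 1 ≤ lam) (hΩ : IsOpen Ω) {z x y : Euc n} (hr : 0 < r)
    (hx : x ∈ Ω ∩ ball z r) (hy : y ∈ Ω ∩ ball z r) :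
    JoinedByCurveIn (Ω ∩ ball z ((1 + 6 * lam) * r)) x y := by
  have hxz := mem_ball.1 hx.2
  have hxy : dist y x < 2 * r :=
    (dist_triangle_right y x z).trans_lt (by linarith [mem_ball.1 hy.2])
  refine (joinedByCurveIn_of_mem_connectedComponentIn (hΩ.inter isOpen_ball)
    (hsp.mem_connectedComponentIn_inter_ball hp hpn hC hlam hΩ hx.1 hy.1 (by positivity) hxy)).mono
    (inter_subset_inter_right _ fun w hw => ?_)
  rw [mem_ball] at hw ⊢
  linarith [dist_triangle w x z]

theorem min_volume_rpow_le (hsp : SobolevPoincareIneq n p C lam Ω) (hp : 0 < p) (hpn : p < n)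
    (hC : 0 ≤ C) (hΩ : IsOpen Ω) {x : Euc n} (hx : x ∈ Ω) {t : ℝ} (ht : 0 < t) :
    min (volume (ball x (t / 2) ∩ Ω)).toReal
        ((volume (ball x (2 * t) ∩ Ω)).toReal - (volume (ball x t ∩ Ω)).toReal) ^
        (((n : ℝ) - p) / ((n : ℝ) * p)) ≤
      8 * C / t * (volume (ball x t ∩ Ω)).toReal ^ (1 / p) := by
  have hfin : ∀ s, volume (ball x s ∩ Ω) ≠ ∞ := fun s =>
    ((measure_mono inter_subset_left).trans_lt measure_ball_lt_top).ne
  have hmeas : ∀ s, MeasurableSet (ball x s ∩ Ω) := fun _ =>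
    measurableSet_ball.inter hΩ.measurableSet
  have hab : t / 2 < 3 * t / 4 := by linarith
  set θ : Euc n → ℝ := fun w => 1 - radialCutoff x (t / 2) (3 * t / 4) w
  have hθ := (LipschitzWith.const (1 : ℝ)).sub (lipschitzWith_radialCutoff (z := x) hab)
  set m := min (volume (ball x (t / 2) ∩ Ω)).toReal
    ((volume (ball x (2 * t) ∩ Ω)).toReal - (volume (ball x t ∩ Ω)).toReal)
  have hm : 0 ≤ m := le_min ENNReal.toReal_nonneg <| sub_nonneg.2 <| ENNReal.toReal_mono (hfin _)
    (measure_mono (inter_subset_inter_left _ (ball_subset_ball (by linarith))))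
  have hm₀ : ENNReal.ofReal m ≤ volume ((ball x (2 * t) ∩ Ω) \ ball x t) :=
    (ENNReal.ofReal_le_ofReal (min_le_right _ _)).trans <|
      (ofReal_toReal_sub_le_measure_sdiff (hfin _) (hfin _)).trans <|
        measure_mono fun w hw => ⟨hw.1, fun h => hw.2 ⟨h, hw.1.2⟩⟩
  have hsep : ∀ a ∈ (ball x (2 * t) ∩ Ω) \ ball x t, ∀ b ∈ ball x (t / 2) ∩ Ω,
      2 * (1 / 2) ≤ |θ a - θ b| := fun a ha b hb => by
    have ha' : 3 * t / 4 ≤ dist a x := by linarith [not_lt.1 (mt mem_ball.2 ha.2)]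
    simp only [θ, radialCutoff_of_le_dist hab ha', radialCutoff_of_dist_le hab (mem_ball.1 hb.1).le]
    norm_num
  have hcore := hsp.mul_rpow_le_of_separated hp hpn hC
    (locallyLipschitzOnSet_of_eventuallyEq fun _ _ => ⟨θ, hθ, EventuallyEq.rfl⟩) hx
    (by positivity : 0 < 2 * t) (measurableSet_closedBall.diff measurableSet_ball)
    (inv_nonneg.2 (sub_pos.2 hab).le)
    (fun w _ => by rw [fderiv_const_sub, norm_neg]; exact norm_fderiv_radialCutoff_le hab w)
    ((hmeas _).diff measurableSet_ball) (hmeas _) sdiff_subset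
    (inter_subset_inter_left _ (ball_subset_ball (by linarith))) (by norm_num) hsep hm hm₀
    (ENNReal.ofReal_le_of_le_toReal (min_le_left _ _))
  have hK : (volume ((closedBall x (3 * t / 4) \ ball x (t / 2)) ∩
      (ball x (lam * (2 * t)) ∩ Ω))).toReal ≤ (volume (ball x t ∩ Ω)).toReal :=
    ENNReal.toReal_mono (hfin _) (measure_mono fun w hw =>
      ⟨closedBall_subset_ball (by linarith) hw.1.1, hw.2.2⟩)
  calc m ^ (((n : ℝ) - p) / ((n : ℝ) * p))
      = 2 * (1 / 2 * m ^ (((n : ℝ) - p) / ((n : ℝ) * p))) := by ring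
    _ ≤ 2 * (C * (3 * t / 4 - t / 2)⁻¹ * (volume (ball x t ∩ Ω)).toReal ^ (1 / p)) :=
        mul_le_mul_of_nonneg_left (hcore.trans (mul_le_mul_of_nonneg_left
          (Real.rpow_le_rpow ENNReal.toReal_nonneg hK (by positivity))
          (mul_nonneg hC (inv_nonneg.2 (by linarith))))) two_pos.le
    _ = 8 * C / t * (volume (ball x t ∩ Ω)).toReal ^ (1 / p) := by
        field_simp
        ring

theorem exists_forall_ofReal_mul_pow_le_volume (hsp : SobolevPoincareIneq n p C lam Ω)
    (hn : 2 ≤ n) (hp : 0 < p) (hpn : p < n) (hC : 0 < C) (hΩ : IsOpen Ω) (hΩne : Ω.Nonempty)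
    (hbdd : Bornology.IsBounded Ω) :
    ∃ δ > 0, ∀ x ∈ Ω, ∀ t, 0 < t → t ≤ diam Ω →
      ENNReal.ofReal (δ * t ^ n) ≤ volume (ball x t ∩ Ω) := by
  obtain ⟨δ₀, hδ₀, hdrop⟩ :=
    exists_forall_le_div_two_pow_of_rpow_le hp hpn (by positivity : (0 : ℝ) < 8 * C)
  have : Nonempty (Fin n) := ⟨⟨0, by omega⟩⟩
  have hvol : 0 < volume Ω := hΩ.measure_pos volume hΩne
  have hD : 0 < diam Ω :=
    diam_pos (not_subsingleton_iff.1 fun h => hvol.ne' (h.measure_zero volume)) hbdd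
  set M := (volume Ω).toReal
  have hM : 0 < M := ENNReal.toReal_pos hvol.ne' hbdd.measure_lt_top.ne
  -- the second bound keeps the doubling step of `exists_mem_Ioc_div_pow_le_half` below `diam Ω`
  set δ := min δ₀ (M / (2 * diam Ω) ^ n)
  refine ⟨δ, lt_min hδ₀ (by positivity), fun x hx t ht htD => ?_⟩
  set Φ : ℝ → ℝ := fun τ => (volume (ball x τ ∩ Ω)).toReal
  have hΦ : ∀ τ, 0 ≤ Φ τ := fun _ => ENNReal.toReal_nonneg
  have hhalf : ∀ τ ∈ Ioc 0 (diam Ω), Φ τ / τ ^ n < δ →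
      ∃ τ' ∈ Ioc 0 (diam Ω), Φ τ' / τ' ^ n ≤ Φ τ / τ ^ n / 2 := fun τ hτ hsmall => by
    refine exists_mem_Ioc_div_pow_le_half hn hτ (hΦ τ) ?_ (fun h2τ => ?_)
      (hsmall.trans_le (min_le_right _ _))
    · exact hdrop τ _ _ hτ.1 (hΦ τ) (hsp.min_volume_rpow_le hp hpn hC.le hΩ hx hτ.1)
        ((div_le_iff₀ (pow_pos hτ.1 n)).1 (hsmall.le.trans (min_le_left _ _)))
    · show (volume (ball x (2 * τ) ∩ Ω)).toReal = M
      rw [inter_eq_right.2 fun w hw => mem_ball.2 ((dist_le_diam_of_mem hbdd hw hx).trans_lt h2τ)]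
  obtain ⟨c, hc, hcΦ⟩ := exists_pos_le_volume_ball_inter_div_pow (by omega) hΩ hx hD
  have key := le_of_forall_exists_le_half hc hcΦ hhalf t ⟨ht, htD⟩
  exact ENNReal.ofReal_le_of_le_toReal ((le_div_iff₀ (pow_pos ht n)).1 key)

theorem half_mul_rpow_le_of_eq_one_of_eq_zero (hsp : SobolevPoincareIneq n p C lam Ω)
    (hp : 0 < p) (hpn : p < n) (hC : 0 ≤ C) (hΩ : IsOpen Ω) {δ : ℝ} (hδ : 0 ≤ δ)
    (hdens : ∀ x ∈ Ω, ∀ t, 0 < t → t ≤ diam Ω →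
      ENNReal.ofReal (δ * t ^ n) ≤ volume (ball x t ∩ Ω))
    (hu : LocallyLipschitzOnSet u Ω) (humeas : Measurable u) {K : Set (Euc n)}
    (hK : MeasurableSet K) {L : ℝ} (hL : 0 ≤ L)
    (hgrad : ∀ w ∈ Ω, ‖fderiv ℝ u w‖ ≤ K.indicator (fun _ => L) w)
    {x y : Euc n} (hx : x ∈ Ω) (hy : y ∈ Ω) {t : ℝ} (ht : 0 < t) (htD : t ≤ diam Ω)
    (hx₀ : ∀ w ∈ ball x (lam * t) ∩ Ω, fderiv ℝ u w = 0)
    (hy₀ : ∀ w ∈ ball y (lam * t) ∩ Ω, fderiv ℝ u w = 0)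
    {V₁ V₀ : Set (Euc n)} (hV₁ : IsOpen V₁) (hV₀ : IsOpen V₀) (hxV : V₁.Nonempty)
    (hyV : V₀.Nonempty) (hV₁x : V₁ ⊆ ball x t ∩ Ω) (hV₀y : V₀ ⊆ ball y t ∩ Ω)
    (hu₁ : ∀ w ∈ V₁, u w = 1) (hu₀ : ∀ w ∈ V₀, u w = 0) :
    1 / 2 * (δ * t ^ n) ^ (((n : ℝ) - p) / ((n : ℝ) * p)) ≤
      C * L * (volume (K ∩ (ball x (lam * (dist x y + t)) ∩ Ω))).toReal ^ (1 / p) := by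
  have hmeas : ∀ x₀ (v : ℝ), MeasurableSet (ball x₀ t ∩ Ω ∩ u ⁻¹' {v}) := fun _ v =>
    (measurableSet_ball.inter hΩ.measurableSet).inter (humeas (measurableSet_singleton v))
  have hvol₁ := hsp.volume_inter_preimage_eq_of_fderiv_eq_zero hp hpn hC hΩ hu hx ht hx₀
    hV₁.measurableSet hV₁x (hV₁.measure_pos volume hxV).ne' hu₁
  have hvol₀ := hsp.volume_inter_preimage_eq_of_fderiv_eq_zero hp hpn hC hΩ hu hy ht hy₀
    hV₀.measurableSet hV₀y (hV₀.measure_pos volume hyV).ne' hu₀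
  refine hsp.mul_rpow_le_of_separated hp hpn hC hu hx (by positivity) hK hL
    (fun w hw => hgrad w hw.2) (hmeas y 0) (hmeas x 1) (fun w hw => ⟨?_, hw.1.2⟩)
    (fun w hw => ⟨?_, hw.1.2⟩) (by norm_num) (fun a ha b hb => ?_) (by positivity)
    (hvol₀ ▸ hdens y hy t ht htD) (hvol₁ ▸ hdens x hx t ht htD)
  · have := mem_ball.1 hw.1.1
    rw [mem_ball]
    linarith [dist_triangle w y x, dist_comm x y]
  · have := mem_ball.1 hw.1.1
    rw [mem_ball]
    linarith [dist_nonneg (x := x) (y := y)]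
  · rw [show u a = 0 from ha.2, show u b = 1 from hb.2]
    norm_num

theorem half_mul_rpow_le_of_notMem_connectedComponentIn (hsp : SobolevPoincareIneq n p C lam Ω)
    (hn : 0 < n) (hp : 0 < p) (hpn : p < n) (hC : 0 ≤ C) (hlam : 1 ≤ lam) (hΩ : IsOpen Ω)
    {δ : ℝ} (hδ : 0 ≤ δ) (hdens : ∀ x ∈ Ω, ∀ t, 0 < t → t ≤ diam Ω →
      ENNReal.ofReal (δ * t ^ n) ≤ volume (ball x t ∩ Ω))
    {z x y : Euc n} {r s : ℝ} (hs : 0 < s) (hsr : 12 * s ≤ r) (hrD : r ≤ 2 * diam Ω)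
    (hx : x ∈ Ω \ ball z r) (hy : y ∈ Ω \ ball z r)
    (hyx : y ∉ connectedComponentIn (Ω \ closedBall z s) x) :
    1 / 2 * (δ * (r / (2 * lam)) ^ n) ^ (((n : ℝ) - p) / ((n : ℝ) * p)) ≤
      C * s⁻¹ * (4 ^ n * (volume (ball (0 : Euc n) 1)).toReal * s ^ n) ^ (1 / p) := by
  set t := r / (2 * lam)
  have ht : 0 < t := div_pos (by linarith) (by linarith)
  have hlt : lam * t = r / 2 := by simp only [t]; field_simp
  have htr : t ≤ r / 2 := div_le_div_of_nonneg_left (by linarith) two_pos (by linarith)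
  set U := Ω \ closedBall z s
  have hU : IsOpen U := hΩ.sdiff isClosed_closedBall
  have hU_of : ∀ w ∈ Ω \ ball z r, w ∈ U := fun w hw =>
    ⟨hw.1, fun h => hw.2 (mem_ball.2 ((mem_closedBall.1 h).trans_lt (by linarith)))⟩
  have hfar : ∀ x₀ ∈ Ω \ ball z r, ∀ w ∈ ball x₀ (r / 2), 3 * s < dist w z :=
    fun x₀ hx₀ w hw => by
      linarith [not_lt.1 (mt mem_ball.2 hx₀.2), mem_ball.1 hw, dist_triangle x₀ w z, dist_comm w x₀]
  have hgrad := fun w (hw : w ∈ Ω) => norm_fderiv_indicator_radialCutoff_le hΩ hs x (z := z) hw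
  have hflat : ∀ x₀ ∈ Ω \ ball z r, ∀ w ∈ ball x₀ (lam * t) ∩ Ω,
      fderiv ℝ ((connectedComponentIn U x).indicator (radialCutoff z (2 * s) (3 * s))) w = 0 :=
    fun x₀ hx₀ w hw => norm_le_zero_iff.1 <| (hgrad w hw.2).trans_eq <| indicator_of_notMem
      (fun hK => (mem_closedBall.1 hK.1).not_gt (hfar x₀ hx₀ w (hlt ▸ hw.1))) _
  refine (hsp.half_mul_rpow_le_of_eq_one_of_eq_zero hp hpn hC hΩ hδ hdens
    (locallyLipschitzOnSet_indicator_radialCutoff hΩ hs x)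
    ((lipschitzWith_radialCutoff (by linarith)).continuous.measurable.indicator
      hU.connectedComponentIn.measurableSet)
    (measurableSet_closedBall.diff measurableSet_ball) (inv_nonneg.2 hs.le) hgrad
    hx.1 hy.1 ht (by linarith) (hflat x hx) (hflat y hy)
    (hU.connectedComponentIn.inter isOpen_ball) ((isOpen_ball.inter hΩ).sdiff isClosed_closure)
    ⟨x, mem_connectedComponentIn (hU_of x hx), mem_ball_self ht⟩
    ⟨y, ⟨mem_ball_self ht, hy.1⟩, notMem_closure_connectedComponentIn hU (hU_of y hy) hyx⟩
    (fun w hw => ⟨hw.2, ((connectedComponentIn_subset U x) hw.1).1⟩) sdiff_subset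
    (fun w hw => by
      rw [indicator_of_mem hw.1]
      exact radialCutoff_of_le_dist (by linarith) (hfar x hx w (ball_subset_ball htr hw.2)).le)
    (fun w hw => indicator_of_notMem (fun h => hw.2 (subset_closure h)) _)).trans ?_
  refine mul_le_mul_of_nonneg_left (Real.rpow_le_rpow ENNReal.toReal_nonneg ?_ (by positivity))
    (mul_nonneg hC (inv_nonneg.2 hs.le))
  exact (toReal_volume_le_of_subset_ball hn (ρ := 4 * s)
    (fun w hw => closedBall_subset_ball (by linarith) hw.1.1) (by positivity)).trans_eq
    (by rw [mul_pow]; ring)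

theorem exists_joinedByCurveIn_diff_ball (hsp : SobolevPoincareIneq n p C lam Ω) (hn : 2 ≤ n)
    (hp : 0 < p) (hpn : p < n) (hC : 0 < C) (hlam : 1 ≤ lam) (hΩ : IsOpen Ω)
    (hΩc : IsConnected Ω) (hbdd : Bornology.IsBounded Ω) :
    ∃ b > 0, ∀ z : Euc n, ∀ r > 0, ∀ x ∈ Ω \ ball z r, ∀ y ∈ Ω \ ball z r,
      JoinedByCurveIn (Ω \ ball z (b * r)) x y := by
  obtain ⟨δ, hδ, hdens⟩ :=
    hsp.exists_forall_ofReal_mul_pow_le_volume hn hp hpn hC hΩ hΩc.nonempty hbdd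
  set K := 2 * C * (4 ^ n * (volume (ball (0 : Euc n) 1)).toReal) ^ (1 / p) /
    δ ^ (((n : ℝ) - p) / ((n : ℝ) * p))
  set a := ((n : ℝ) - p) / p
  have ha : 0 < a := div_pos (sub_pos.2 hpn) hp
  -- `b` is chosen so small that the conclusion of `one_le_mul_div_rpow_of_le` fails
  have hcont : Continuous fun b : ℝ => K * (2 * lam * b) ^ a :=
    continuous_const.mul ((continuous_const.mul continuous_id).rpow_const fun _ => Or.inr ha.le)
  have hlim := hcont.tendsto 0
  simp only [mul_zero, Real.zero_rpow ha.ne'] at hlim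
  obtain ⟨b, hb, hb12, hbK⟩ := ((eventually_le_nhds (by norm_num : (0 : ℝ) < 1 / 12)).and
    (hlim.eventually_lt_const one_pos)).exists_gt
  refine ⟨b, hb, fun z r hr x hx y hy => ?_⟩
  by_cases hyx : y ∈ connectedComponentIn (Ω \ closedBall z (b * r)) x
  · exact (joinedByCurveIn_of_mem_connectedComponentIn (hΩ.sdiff isClosed_closedBall) hyx).mono
      (sdiff_subset_sdiff_right ball_subset_closedBall)
  exfalso
  have hrD : r ≤ 2 * diam Ω := by
    by_contra! hrD
    refine hyx ?_
    rw [sdiff_eq_left.2 (disjoint_left.2 fun w hw hwz => ?_)]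
    · exact hΩc.isPreconnected.subset_connectedComponentIn hx.1 subset_rfl hy.1
    linarith [mem_closedBall.1 hwz, dist_le_diam_of_mem hbdd hx.1 hw, dist_triangle x w z,
      not_lt.1 (mt mem_ball.2 hx.2), mul_le_mul_of_nonneg_right hb12 hr.le]
  have hkey := hsp.half_mul_rpow_le_of_notMem_connectedComponentIn (by omega) hp hpn hC.le hlam hΩ
    hδ.le hdens (by positivity : 0 < b * r) (by nlinarith) hrD hx hy hyx
  have := one_le_mul_div_rpow_of_le hp hpn hδ (by positivity) (div_pos hr (by linarith))
    (by positivity) hkey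
  rw [show b * r / (r / (2 * lam)) = 2 * lam * b by field_simp] at this
  linarith

end SobolevPoincareIneq

/-- a bounded domain supporting the local Sobolev–Poincaré
inequality of order `p`, `1 ≤ p < n`, at all scales `0 < r < ∞`, is LLC. -/
theorem stmt18 (n : ℕ) (hn : 2 ≤ n) (p : ℝ) (hp1 : 1 ≤ p) (hpn : p < n)
    (Ω : Set (Euc n)) (hOpen : IsOpen Ω)
    (hConn : IsConnected Ω) (hBdd : Bornology.IsBounded Ω)
    (hSP : ∃ C : ℝ, 1 ≤ C ∧ ∃ lam : ℝ, 1 ≤ lam ∧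
      ∀ u : Euc n → ℝ, LocallyLipschitzOnSet u Ω →
        ∀ x₀ ∈ Ω, ∀ r : ℝ, 0 < r →
          (⨅ c : ℝ, (∫⁻ y in ball x₀ r ∩ Ω,
              ENNReal.ofReal |u y - c| ^ ((n : ℝ) * p / ((n : ℝ) - p)) ∂volume)
                ^ (((n : ℝ) - p) / ((n : ℝ) * p)))
            ≤ ENNReal.ofReal C *
              (∫⁻ y in ball x₀ (lam * r) ∩ Ω,
                ENNReal.ofReal ‖fderiv ℝ u y‖ ^ p ∂volume) ^ (1 / p)) :
    IsLLC Ω := by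
  obtain ⟨C, hC, lam, hlam, hsp⟩ := hSP
  replace hsp : SobolevPoincareIneq n p C lam Ω := hsp
  have hp : 0 < p := by linarith
  obtain ⟨b, hb, hfar⟩ :=
    hsp.exists_joinedByCurveIn_diff_ball hn hp hpn (by linarith) hlam hOpen hConn hBdd
  have hnear : 0 < (1 + 6 * lam)⁻¹ := by positivity
  refine ⟨min (1 + 6 * lam)⁻¹ b, lt_min hnear hb,
    (min_le_left _ _).trans (inv_le_one_of_one_le₀ (by linarith)), fun z r hr =>
      ⟨fun x hx y hy => ?_, fun x hx y hy => ?_⟩⟩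
  · refine (hsp.joinedByCurveIn_inter_ball hp hpn (by linarith) hlam hOpen hr hx hy).mono
      (inter_subset_inter_right _ (ball_subset_ball ?_))
    calc (1 + 6 * lam) * r = r / (1 + 6 * lam)⁻¹ := by rw [div_inv_eq_mul, mul_comm]
      _ ≤ r / min (1 + 6 * lam)⁻¹ b :=
          div_le_div_of_nonneg_left hr.le (lt_min hnear hb) (min_le_left _ _)
  · exact (hfar z r hr x hx y hy).mono <| sdiff_subset_sdiff_right <|
      ball_subset_ball (mul_le_mul_of_nonneg_right (min_le_right _ _) hr.le)
end
end
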